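/- arXiv:2504.16230 — 5 statements merged into one kernel-verified Lean document; each statement's English description precedes it below -/
import Mathlib

section
/- Under the setup and Assumptions A4 and A5, assume additionally that Y = Y(1) almost surely on the event {A = 1, E = 1} (consistency for the treated) and that μ({A = 1, E = 1}) > 0. Then E[A·R·E·Y/η₁(L*)] = E[A·E·Y] and E[A·R·E/η₁(L*)] = μ({A = 1, E = 1}); consequently the mean outcome under treatment among the eligible treated is identified: E[Y(1) | {A = 1, E = 1}] = E[A·R·E·Y/η₁(L*)] / E[A·R·E/η₁(L*)], where the expectation on the left is under the conditional measure μ(·|{A = 1, E = 1}). -/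
open MeasureTheory ProbabilityTheory
open scoped ENNReal ProbabilityTheory

/-!
Put `c := A / η(L*, 1)`, a bounded σ(L*, A)-measurable weight with `c · η(L*, A) = A`. By MAR,
`P(R = 1, W ∈ t | L*, A) = η(L*, A) · P(W ∈ t | L*, A)` for `W = (L, Y)`, so pulling `c` into and
out of conditional expectations gives `E[R c; W ∈ t] = E[A; W ∈ t]`. The measures with densities
`R c` and `A` thus have the same image under `W`, whence `E[R c ψ(W)] = E[A ψ(W)]` for every
measurable `ψ`. The choices `ψ(l, y) = g(l, 1) y` and `ψ(l, y) = g(l, 1)` give the two identities,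
and the third is their quotient because `A g(L, A)` is the indicator of `{A = 1, E = 1}`, on which
`Y = Y(1)`.
-/

theorem setIntegral_eq_integral_mul_indicator_one {Ω : Type*} {mΩ : MeasurableSpace Ω}
    {μ : Measure Ω} {s : Set Ω} (hs : MeasurableSet s)
    (f : Ω → ℝ) : ∫ ω in s, f ω ∂μ = ∫ ω, f ω * s.indicator 1 ω ∂μ := by
  rw [← integral_indicator hs]
  congr 1 with ω
  by_cases h : ω ∈ s <;> simp [h]

theorem mul_eq_indicator_setOf_and {Ω : Type*} {a b : Ω → ℝ}
    (ha : ∀ ω, a ω = 0 ∨ a ω = 1) (hb : ∀ ω, b ω = 0 ∨ b ω = 1) (ω : Ω) :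
    a ω * b ω = {ω | a ω = 1 ∧ b ω = 1}.indicator 1 ω := by
  rcases ha ω with h | h <;> rcases hb ω with h' | h' <;> simp [h, h']

section PullOut

variable {Ω : Type*} {m mΩ : MeasurableSpace Ω} {μ : Measure Ω} [IsFiniteMeasure μ]

theorem integral_mul_condExp_of_bound (hm : m ≤ mΩ) {f g : Ω → ℝ}
    (hf : AEStronglyMeasurable[m] f μ) (hg : Integrable g μ) (C : ℝ)
    (hf_bound : ∀ᵐ ω ∂μ, ‖f ω‖ ≤ C) :
    ∫ ω, f ω * μ[g | m] ω ∂μ = ∫ ω, f ω * g ω ∂μ :=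
  calc ∫ ω, f ω * μ[g | m] ω ∂μ = ∫ ω, μ[f * g | m] ω ∂μ :=
        integral_congr_ae (condExp_stronglyMeasurable_mul_of_bound₀ hm hf hg C hf_bound).symm
    _ = ∫ ω, f ω * g ω ∂μ := integral_condExp hm

theorem setIntegral_inter_eq_setIntegral_mul_condExp (hm : m ≤ mΩ) {s t : Set Ω}
    (hs : MeasurableSet s) (ht : MeasurableSet t)
    (hst : μ⟦s ∩ t | m⟧ =ᵐ[μ] fun ω => (μ⟦s | m⟧) ω * (μ⟦t | m⟧) ω)
    {c : Ω → ℝ} (hc : AEStronglyMeasurable[m] c μ) (C : ℝ)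
    (hc_bound : ∀ᵐ ω ∂μ, ‖c ω‖ ≤ C) :
    ∫ ω in s ∩ t, c ω ∂μ = ∫ ω in t, c ω * (μ⟦s | m⟧) ω ∂μ := by
  have hs_bound : ∀ᵐ ω ∂μ, ‖(μ⟦s | m⟧) ω‖ ≤ 1 :=
    ae_bdd_norm_condExp_of_ae_bdd_norm (.of_forall fun ω => by
      by_cases h : ω ∈ s <;> simp [h])
  have hcs_bound : ∀ᵐ ω ∂μ, ‖c ω * (μ⟦s | m⟧) ω‖ ≤ C := by
    filter_upwards [hc_bound, hs_bound] with ω hcω hsω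
    rw [norm_mul]
    exact (mul_le_of_le_one_right (norm_nonneg _) hsω).trans hcω
  calc ∫ ω in s ∩ t, c ω ∂μ = ∫ ω, c ω * (μ⟦s ∩ t | m⟧) ω ∂μ := by
        rw [setIntegral_eq_integral_mul_indicator_one (hs.inter ht),
          integral_mul_condExp_of_bound hm hc ((integrable_const 1).indicator (hs.inter ht))
            C hc_bound]
        rfl
    _ = ∫ ω, c ω * (μ⟦s | m⟧) ω * (μ⟦t | m⟧) ω ∂μ :=
        integral_congr_ae (hst.mono fun ω h => by simp only [h, mul_assoc])
    _ = ∫ ω in t, c ω * (μ⟦s | m⟧) ω ∂μ := by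
        rw [setIntegral_eq_integral_mul_indicator_one ht]
        exact integral_mul_condExp_of_bound (f := fun ω => c ω * (μ⟦s | m⟧) ω) hm
          (hc.mul stronglyMeasurable_condExp.aestronglyMeasurable)
          ((integrable_const 1).indicator ht) C hcs_bound

end PullOut

section WeightedPushforward

variable {Ω β : Type*} {mΩ : MeasurableSpace Ω} {mβ : MeasurableSpace β} {μ : Measure Ω}

theorem integral_mul_comp_eq_of_setIntegral_preimage_eq {w₁ w₂ : Ω → ℝ} {W : Ω → β}
    (hw₁ : Measurable w₁) (hw₂ : Measurable w₂) (hw₁_nn : 0 ≤ᵐ[μ] w₁) (hw₂_nn : 0 ≤ᵐ[μ] w₂)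
    (hw₁_int : Integrable w₁ μ) (hw₂_int : Integrable w₂ μ) (hW : Measurable W)
    (h : ∀ t, MeasurableSet t → ∫ ω in W ⁻¹' t, w₁ ω ∂μ = ∫ ω in W ⁻¹' t, w₂ ω ∂μ)
    {ψ : β → ℝ} (hψ : Measurable ψ) :
    ∫ ω, w₁ ω * ψ (W ω) ∂μ = ∫ ω, w₂ ω * ψ (W ω) ∂μ := by
  -- both sides are integrals of `ψ` against the same image measure, so `ψ ∘ W` need not be
  -- integrable
  have weighted : ∀ w : Ω → ℝ, Measurable w → 0 ≤ᵐ[μ] w →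
      ∫ ω, w ω * ψ (W ω) ∂μ
        = ∫ x, ψ x ∂(μ.withDensity fun ω => ENNReal.ofReal (w ω)).map W := by
    intro w hw hw_nn
    rw [integral_map hW.aemeasurable hψ.aestronglyMeasurable,
      integral_withDensity_eq_integral_toReal_smul hw.ennreal_ofReal
        (.of_forall fun _ => ENNReal.ofReal_lt_top)]
    refine integral_congr_ae (hw_nn.mono fun ω hω => ?_)
    simp [ENNReal.toReal_ofReal hω]
  have hmap : (μ.withDensity fun ω => ENNReal.ofReal (w₁ ω)).map W
      = (μ.withDensity fun ω => ENNReal.ofReal (w₂ ω)).map W := by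
    ext t ht
    rw [Measure.map_apply hW ht, Measure.map_apply hW ht, withDensity_apply _ (hW ht),
      withDensity_apply _ (hW ht),
      ← ofReal_integral_eq_lintegral_ofReal hw₁_int.restrict (ae_restrict_of_ae hw₁_nn),
      ← ofReal_integral_eq_lintegral_ofReal hw₂_int.restrict (ae_restrict_of_ae hw₂_nn), h t ht]
  rw [weighted w₁ hw₁ hw₁_nn, weighted w₂ hw₂ hw₂_nn, hmap]

end WeightedPushforward

section CondIndep

variable {Ω β : Type*} {m mΩ : MeasurableSpace Ω} [StandardBorelSpace Ω]
  {mβ : MeasurableSpace β} {μ : Measure Ω} [IsFiniteMeasure μ]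

theorem integral_mul_mul_comp_eq_of_condIndepFun (hm : m ≤ mΩ) {R : Ω → ℝ} {W : Ω → β}
    (hR : Measurable R) (hR01 : ∀ ω, R ω = 0 ∨ R ω = 1) (hW : Measurable W)
    (hRW : CondIndepFun m hm R W μ) {c : Ω → ℝ} (hc : Measurable[m] c) (hc_nn : 0 ≤ᵐ[μ] c)
    (C : ℝ) (hc_bound : ∀ᵐ ω ∂μ, ‖c ω‖ ≤ C) {ψ : β → ℝ} (hψ : Measurable ψ) :
    ∫ ω, R ω * c ω * ψ (W ω) ∂μ = ∫ ω, c ω * μ[R | m] ω * ψ (W ω) ∂μ := by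
  set s := R ⁻¹' {1}
  have hs : MeasurableSet s := hR (measurableSet_singleton 1)
  have hR_eq : R = s.indicator 1 := by
    funext ω
    rcases hR01 ω with h | h <;> simp [s, h]
  have hRc_eq : R * c = s.indicator c := by
    funext ω
    rcases hR01 ω with h | h <;> simp [s, h]
  have hR_nn : ∀ ω, 0 ≤ R ω := fun ω => by rcases hR01 ω with h | h <;> simp [h]
  have hcΩ : Measurable c := hc.mono hm le_rfl
  have hc_int : Integrable c μ := .of_bound hcΩ.aestronglyMeasurable C hc_bound
  refine integral_mul_comp_eq_of_setIntegral_preimage_eq (hR.mul hcΩ)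
    ((hc.mul stronglyMeasurable_condExp.measurable).mono hm le_rfl) ?_ ?_ ?_
    (integrable_condExp.bdd_mul hcΩ.aestronglyMeasurable hc_bound) hW (fun t ht => ?_) hψ
  · filter_upwards [hc_nn] with ω hω using mul_nonneg (hR_nn ω) hω
  · filter_upwards [hc_nn, condExp_nonneg (m := m) (.of_forall hR_nn)] with ω h₁ h₂
    exact mul_nonneg h₁ h₂
  · rw [hRc_eq]
    exact hc_int.indicator hs
  · have hfac := (condIndepFun_iff_condExp_inter_preimage_eq_mul hR hW).1 hRW {1} t
      (measurableSet_singleton 1) ht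
    rw [hRc_eq, setIntegral_indicator hs, Set.inter_comm, hR_eq]
    exact setIntegral_inter_eq_setIntegral_mul_condExp hm hs (hW ht) hfac
      hc.aestronglyMeasurable C hc_bound

end CondIndep

theorem integral_ipw_eq {Ω X β : Type*} {mΩ : MeasurableSpace Ω}
    [StandardBorelSpace Ω] {mX : MeasurableSpace X} {mβ : MeasurableSpace β}
    {μ : Measure Ω} [IsFiniteMeasure μ] {Lstar : Ω → X} {A R : Ω → ℝ} {W : Ω → β}
    (hLstar : Measurable Lstar) (hA : Measurable A) (hR : Measurable R) (hW : Measurable W)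
    (hA01 : ∀ ω, A ω = 0 ∨ A ω = 1) (hR01 : ∀ ω, R ω = 0 ∨ R ω = 1)
    (hMAR : CondIndepFun (MeasurableSpace.comap (fun ω => (Lstar ω, A ω)) inferInstance)
      ((hLstar.prodMk hA).comap_le) R W μ)
    {η : X → ℝ → ℝ} (hη : Measurable (Function.uncurry η))
    (hηver : (fun ω => η (Lstar ω) (A ω)) =ᵐ[μ]
      μ[R|MeasurableSpace.comap (fun ω => (Lstar ω, A ω)) inferInstance])
    {ε₀ : ℝ} (hε₀ : 0 < ε₀) (hη₁ : ∀ᵐ ω ∂μ, ε₀ ≤ η (Lstar ω) 1)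
    {ψ : β → ℝ} (hψ : Measurable ψ) :
    ∫ ω, A ω * R ω * ψ (W ω) / η (Lstar ω) 1 ∂μ = ∫ ω, A ω * ψ (W ω) ∂μ := by
  set m := MeasurableSpace.comap (fun ω => (Lstar ω, A ω)) inferInstance
  set c : Ω → ℝ := fun ω => A ω / η (Lstar ω) 1
  have hc : Measurable[m] c :=
    (measurable_snd.div (hη.comp (measurable_fst.prodMk measurable_const))).comp
      (comap_measurable _)
  have hc_facts : ∀ᵐ ω ∂μ, 0 ≤ c ω ∧ ‖c ω‖ ≤ ε₀⁻¹ ∧ c ω * η (Lstar ω) (A ω) = A ω := by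
    filter_upwards [hη₁] with ω hω
    have hpos : 0 < η (Lstar ω) 1 := hε₀.trans_le hω
    rcases hA01 ω with h | h
    · simp [c, h, hε₀.le]
    · simp only [c, h, one_div, norm_inv, Real.norm_of_nonneg hpos.le]
      exact ⟨by positivity, inv_anti₀ hε₀ hω, inv_mul_cancel₀ hpos.ne'⟩
  calc ∫ ω, A ω * R ω * ψ (W ω) / η (Lstar ω) 1 ∂μ = ∫ ω, R ω * c ω * ψ (W ω) ∂μ := by
        congr 1 with ω
        simp only [c]
        ring
    _ = ∫ ω, c ω * μ[R | m] ω * ψ (W ω) ∂μ :=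
        integral_mul_mul_comp_eq_of_condIndepFun _ hR hR01 hW hMAR hc
          (hc_facts.mono fun _ h => h.1) ε₀⁻¹ (hc_facts.mono fun _ h => h.2.1) hψ
    _ = ∫ ω, A ω * ψ (W ω) ∂μ := by
        refine integral_congr_ae ?_
        filter_upwards [hηver, hc_facts] with ω hηω hcω
        rw [← hηω, hcω.2.2]

theorem stmt_2_general
    {Ω : Type*} [𝓕 : MeasurableSpace Ω] [StandardBorelSpace Ω]
    (μ : Measure Ω) [IsProbabilityMeasure μ]
    {p q : ℕ}
    (Lstar : Ω → Fin p → ℝ) (L : Ω → Fin q → ℝ) (A R Y : Ω → ℝ)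
    (hLstar : Measurable Lstar) (hL : Measurable L)
    (hA : Measurable A) (hR : Measurable R) (hY : Measurable Y)
    (hA01 : ∀ ω, A ω = 0 ∨ A ω = 1) (hR01 : ∀ ω, R ω = 0 ∨ R ω = 1)
    (g : (Fin q → ℝ) → ℝ → ℝ) (hg : Measurable (Function.uncurry g))
    (hg01 : ∀ x a, g x a = 0 ∨ g x a = 1)
    -- Assumption A4 (MAR): R ⫫ (L, Y) | σ(L*, A)
    (hMAR : CondIndepFun (MeasurableSpace.comap (fun ω => (Lstar ω, A ω)) inferInstance)
      ((hLstar.prodMk hA).comap_le) R (fun ω => (L ω, Y ω)) μ)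
    -- Assumption A5 (missingness positivity)
    (η : (Fin p → ℝ) → ℝ → ℝ) (hη : Measurable (Function.uncurry η))
    (hηver : (fun ω => η (Lstar ω) (A ω)) =ᵐ[μ]
      μ[R|MeasurableSpace.comap (fun ω => (Lstar ω, A ω)) inferInstance])
    (ε₀ : ℝ) (hε₀ : 0 < ε₀)
    (hηpos : ∀ᵐ ω ∂μ, ε₀ ≤ η (Lstar ω) 0 ∧ ε₀ ≤ η (Lstar ω) 1)
    -- consistency for the treated
    (Y1 : Ω → ℝ)
    (hcons : ∀ᵐ ω ∂μ, (A ω = 1 ∧ g (L ω) (A ω) = 1) → Y ω = Y1 ω) :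
    (∫ ω, A ω * R ω * g (L ω) (A ω) * Y ω / η (Lstar ω) 1 ∂μ
        = ∫ ω, A ω * g (L ω) (A ω) * Y ω ∂μ) ∧
    (∫ ω, A ω * R ω * g (L ω) (A ω) / η (Lstar ω) 1 ∂μ
        = (μ {ω | A ω = 1 ∧ g (L ω) (A ω) = 1}).toReal) ∧
    (∫ ω, Y1 ω ∂(μ[|{ω | A ω = 1 ∧ g (L ω) (A ω) = 1}])
        = (∫ ω, A ω * R ω * g (L ω) (A ω) * Y ω / η (Lstar ω) 1 ∂μ)
          / (∫ ω, A ω * R ω * g (L ω) (A ω) / η (Lstar ω) 1 ∂μ)) := by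
  set S := {ω | A ω = 1 ∧ g (L ω) (A ω) = 1}
  have hS : MeasurableSet S :=
    (hA (measurableSet_singleton 1)).inter ((hg.comp (hL.prodMk hA)) (measurableSet_singleton 1))
  have hS_ind : ∀ ω, A ω * g (L ω) (A ω) = S.indicator 1 ω :=
    mul_eq_indicator_setOf_and hA01 fun ω => hg01 (L ω) (A ω)
  have hAg : ∀ ω, A ω * g (L ω) (A ω) = A ω * g (L ω) 1 := fun ω => by
    rcases hA01 ω with h | h <;> simp [h]
  have ipw : ∀ φ : ℝ → ℝ, Measurable φ →
      ∫ ω, A ω * R ω * g (L ω) (A ω) * φ (Y ω) / η (Lstar ω) 1 ∂μ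
        = ∫ ω, A ω * g (L ω) (A ω) * φ (Y ω) ∂μ := fun φ hφ => by
    calc _ = ∫ ω, A ω * R ω * (g (L ω) 1 * φ (Y ω)) / η (Lstar ω) 1 ∂μ := by
          congr 1 with ω
          linear_combination R ω * φ (Y ω) / η (Lstar ω) 1 * hAg ω
      _ = ∫ ω, A ω * (g (L ω) 1 * φ (Y ω)) ∂μ :=
          integral_ipw_eq hLstar hA hR (hL.prodMk hY) hA01 hR01 hMAR hη hηver hε₀
            (hηpos.mono fun _ h => h.2)
            ((hg.comp (measurable_fst.prodMk measurable_const)).mul (hφ.comp measurable_snd))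
      _ = _ := by
          congr 1 with ω
          linear_combination -φ (Y ω) * hAg ω
  have claim1 : ∫ ω, A ω * R ω * g (L ω) (A ω) * Y ω / η (Lstar ω) 1 ∂μ
      = ∫ ω, A ω * g (L ω) (A ω) * Y ω ∂μ := ipw id measurable_id
  have claim2 : ∫ ω, A ω * R ω * g (L ω) (A ω) / η (Lstar ω) 1 ∂μ = (μ S).toReal := by
    simpa [hS_ind, integral_indicator_one hS, Measure.real] using ipw 1 measurable_const
  have hY1_S : ∫ ω in S, Y1 ω ∂μ = ∫ ω, A ω * g (L ω) (A ω) * Y ω ∂μ := by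
    rw [setIntegral_congr_ae hS (hcons.mono fun ω h hω => (h hω).symm),
      setIntegral_eq_integral_mul_indicator_one hS]
    simp_rw [hS_ind, mul_comm]
  refine ⟨claim1, claim2, ?_⟩
  rw [claim1, claim2, ProbabilityTheory.cond, integral_smul_measure, hY1_S, ENNReal.toReal_inv,
    smul_eq_mul, div_eq_inv_mul]

/-- Identification of the treated-arm mean among the eligible treated, under MAR (A4),
missingness positivity (A5), and consistency for the treated. -/
theorem stmt_2
    {Ω : Type*} [𝓕 : MeasurableSpace Ω] [StandardBorelSpace Ω] [Nonempty Ω]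
    (μ : Measure Ω) [IsProbabilityMeasure μ]
    {p q : ℕ}
    (Lstar : Ω → Fin p → ℝ) (L : Ω → Fin q → ℝ) (A R Y : Ω → ℝ)
    (hLstar : Measurable Lstar) (hL : Measurable L)
    (hA : Measurable A) (hR : Measurable R) (hY : Measurable Y)
    (hA01 : ∀ ω, A ω = 0 ∨ A ω = 1) (hR01 : ∀ ω, R ω = 0 ∨ R ω = 1)
    (hY2 : MemLp Y 2 μ)
    (g : (Fin q → ℝ) → ℝ → ℝ) (hg : Measurable (Function.uncurry g))
    (hg01 : ∀ x a, g x a = 0 ∨ g x a = 1)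
    -- Assumption A4 (MAR): R ⫫ (L, Y) | σ(L*, A)
    (hMAR : CondIndepFun (MeasurableSpace.comap (fun ω => (Lstar ω, A ω)) inferInstance)
      ((hLstar.prodMk hA).comap_le) R (fun ω => (L ω, Y ω)) μ)
    -- Assumption A5 (missingness positivity)
    (η : (Fin p → ℝ) → ℝ → ℝ) (hη : Measurable (Function.uncurry η))
    (hηver : (fun ω => η (Lstar ω) (A ω)) =ᵐ[μ]
      μ[R|MeasurableSpace.comap (fun ω => (Lstar ω, A ω)) inferInstance])
    (ε₀ : ℝ) (hε₀ : 0 < ε₀)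
    (hηpos : ∀ᵐ ω ∂μ, ε₀ ≤ η (Lstar ω) 0 ∧ ε₀ ≤ η (Lstar ω) 1)
    -- consistency for the treated and positivity of the eligible-treated event
    (Y1 : Ω → ℝ) (hY1 : Integrable Y1 μ)
    (hcons : ∀ᵐ ω ∂μ, (A ω = 1 ∧ g (L ω) (A ω) = 1) → Y ω = Y1 ω)
    (hAE : 0 < μ {ω | A ω = 1 ∧ g (L ω) (A ω) = 1}) :
    (∫ ω, A ω * R ω * g (L ω) (A ω) * Y ω / η (Lstar ω) 1 ∂μ
        = ∫ ω, A ω * g (L ω) (A ω) * Y ω ∂μ) ∧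
    (∫ ω, A ω * R ω * g (L ω) (A ω) / η (Lstar ω) 1 ∂μ
        = (μ {ω | A ω = 1 ∧ g (L ω) (A ω) = 1}).toReal) ∧
    (∫ ω, Y1 ω ∂(μ[|{ω | A ω = 1 ∧ g (L ω) (A ω) = 1}])
        = (∫ ω, A ω * R ω * g (L ω) (A ω) * Y ω / η (Lstar ω) 1 ∂μ)
          / (∫ ω, A ω * R ω * g (L ω) (A ω) / η (Lstar ω) 1 ∂μ)) :=
  stmt_2_general (𝓕 := 𝓕) μ Lstar L A R Y hLstar hL hA hR hY hA01 hR01 g hg hg01 hMAR η hη hηver ε₀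
    hε₀ hηpos Y1 hcons
end

section
/- Under the setup and Assumptions A4 and A5, assume μ({A = 0, R = 1}) > 0, and let m : ℝ^p × ℝ^q → ℝ be measurable such that m(L*, L) is a version of the conditional expectation E[Y | σ(L*, L)] under the complete-case conditional measure μ(·|{A = 0, R = 1}). Then m(L*, L) is also a version of E[Y | σ(L*, L)] under μ(·|{A = 0}). In other words, under MAR the complete-case outcome regression among untreated subjects coincides with the full-data outcome regression among untreated subjects. -/
open MeasureTheory ProbabilityTheory
open scoped ENNReal NNReal

/-! Under MAR, reweighting the complete cases among the untreated by `1 / η(L*, 0)` reproduces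
the joint law of `(L*, L, Y)` among all the untreated: on a rectangle this is the factorisation
`P(R = 1, (L, Y) ∈ B | L*, A) = η(L*, A) · P((L, Y) ∈ B | L*, A)`, and a π-system argument does
the rest. The weight is a function of `(L*, L)`, and reweighting by a function of the
conditioning variables leaves the regression of `Y` on them unchanged, so the complete-case
regression `m` is also the regression among all the untreated. -/

section

variable {Ω α β γ δ : Type*} {m : MeasurableSpace Ω} [mΩ : MeasurableSpace Ω]

theorem integral_mul_eq_of_ae_eq_condExp (hm : m ≤ mΩ)
    {ν : Measure Ω} [IsFiniteMeasure ν] {f Y W : Ω → ℝ} {C : ℝ}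
    (hW : StronglyMeasurable[m] W) (hWC : ∀ ω, ‖W ω‖ ≤ C) (hY : Integrable Y ν)
    (hf : f =ᵐ[ν] ν[Y | m]) :
    ∫ ω, W ω * f ω ∂ν = ∫ ω, W ω * Y ω ∂ν := calc
  ∫ ω, W ω * f ω ∂ν = ∫ ω, (W * ν[Y | m]) ω ∂ν :=
    integral_congr_ae (hf.mono fun ω hω => by simp [hω])
  _ = ∫ ω, ν[W * Y | m] ω ∂ν := integral_congr_ae
    (condExp_mul_of_stronglyMeasurable_left hW
      (hY.bdd_mul (hW.mono hm).aestronglyMeasurable (.of_forall hWC)) hY).symm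
  _ = ∫ ω, W ω * Y ω ∂ν := integral_condExp hm

theorem setIntegral_eq_integral_mul_indicator {μ : Measure Ω} {v : Set Ω} (hv : MeasurableSet v)
    (ψ : Ω → ℝ) : ∫ ω in v, ψ ω ∂μ = ∫ ω, ψ ω * v.indicator (fun _ => (1 : ℝ)) ω ∂μ := by
  rw [← integral_indicator hv]
  simp only [← Set.indicator_mul_right, mul_one]

theorem setIntegral_preimage_inter_eq_of_condIndepFun [StandardBorelSpace Ω]
    {hm : m ≤ mΩ} {μ : Measure Ω} [IsFiniteMeasure μ]
    [MeasurableSpace β] [MeasurableSpace γ] {R : Ω → β} {Z : Ω → γ}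
    (hR : Measurable R) (hZ : Measurable Z) (hRZ : CondIndepFun m hm R Z μ)
    {s : Set β} {t : Set γ} (hs : MeasurableSet s) (ht : MeasurableSet t)
    {φ : Ω → ℝ} {C : ℝ} (hφ : StronglyMeasurable[m] φ) (hφC : ∀ ω, ‖φ ω‖ ≤ C) :
    ∫ ω in R ⁻¹' s ∩ Z ⁻¹' t, φ ω ∂μ = ∫ ω in Z ⁻¹' t, φ ω * (μ⟦R ⁻¹' s | m⟧) ω ∂μ := by
  have hind : ∀ {v : Set Ω}, MeasurableSet v → Integrable (v.indicator fun _ => (1 : ℝ)) μ :=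
    fun hv => (integrable_const 1).indicator hv
  have hφ' : AEStronglyMeasurable φ μ := (hφ.mono hm).aestronglyMeasurable
  have hprod := (condIndepFun_iff_condExp_inter_preimage_eq_mul hR hZ).mp hRZ s t hs ht
  have hst := (hR hs).inter (hZ ht)
  have hφs : Integrable (φ * μ⟦R ⁻¹' s | m⟧) μ :=
    integrable_condExp.bdd_mul hφ' (.of_forall hφC)
  calc ∫ ω in R ⁻¹' s ∩ Z ⁻¹' t, φ ω ∂μ
      = ∫ ω, φ ω * (R ⁻¹' s ∩ Z ⁻¹' t).indicator (fun _ => (1 : ℝ)) ω ∂μ :=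
        setIntegral_eq_integral_mul_indicator hst φ
    _ = ∫ ω, (φ * μ⟦R ⁻¹' s ∩ Z ⁻¹' t | m⟧) ω ∂μ := by
        rw [← integral_condExp hm]
        exact integral_congr_ae (condExp_mul_of_stronglyMeasurable_left hφ
          ((hind hst).bdd_mul hφ' (.of_forall hφC)) (hind hst))
    _ = ∫ ω, (φ * μ⟦R ⁻¹' s | m⟧ * μ⟦Z ⁻¹' t | m⟧) ω ∂μ :=
        integral_congr_ae (hprod.mono fun ω hω => by simp [hω, mul_assoc])
    _ = ∫ ω, μ[φ * μ⟦R ⁻¹' s | m⟧ * (Z ⁻¹' t).indicator (fun _ => (1 : ℝ)) | m] ω ∂μ :=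
        integral_congr_ae (condExp_mul_of_stronglyMeasurable_left
          (hφ.mul stronglyMeasurable_condExp)
          (hφs.mul_bdd (hind (hZ ht)).aestronglyMeasurable (c := 1) (.of_forall fun ω =>
            (norm_indicator_le_norm_self _ ω).trans_eq norm_one))
          (hind (hZ ht))).symm
    _ = ∫ ω in Z ⁻¹' t, φ ω * (μ⟦R ⁻¹' s | m⟧) ω ∂μ := by
        rw [integral_condExp hm, setIntegral_eq_integral_mul_indicator (hZ ht)]
        rfl

theorem withDensity_le_smul_of_le {μ : Measure Ω} {w : Ω → ℝ≥0} {C : ℝ≥0} (hwC : ∀ ω, w ω ≤ C) :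
    μ.withDensity (fun ω => w ω) ≤ (C : ℝ≥0∞) • μ := by
  rw [← withDensity_const]
  exact withDensity_mono (.of_forall fun ω => ENNReal.coe_le_coe.2 (hwC ω))

theorem withDensity_preimage_inter_eq_of_condIndepFun [StandardBorelSpace Ω]
    [mα : MeasurableSpace α] [MeasurableSpace β] [MeasurableSpace γ]
    {μ : Measure Ω} [IsFiniteMeasure μ] {G : Ω → α} {R : Ω → β} {Z : Ω → γ}
    (hG : Measurable G) (hR : Measurable R) (hZ : Measurable Z)
    (hRZ : CondIndepFun (mα.comap G) hG.comap_le R Z μ)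
    {s : Set β} (hs : MeasurableSet s) {u : Set Ω} (hu : MeasurableSet[mα.comap G] u)
    {w : Ω → ℝ≥0} {C : ℝ≥0} (hw : Measurable[mα.comap G] w) (hwC : ∀ ω, w ω ≤ C)
    (hwR : ∀ᵐ ω ∂μ, ω ∈ u → (w ω : ℝ) * (μ⟦R ⁻¹' s | mα.comap G⟧) ω = 1)
    {B₁ : Set α} {B₂ : Set γ} (hB₁ : MeasurableSet B₁) (hB₂ : MeasurableSet B₂) :
    (μ.restrict (u ∩ R ⁻¹' s)).withDensity (fun ω => w ω) (G ⁻¹' B₁ ∩ Z ⁻¹' B₂) =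
      μ.restrict u (G ⁻¹' B₁ ∩ Z ⁻¹' B₂) := by
  set v := u ∩ G ⁻¹' B₁
  have hv : MeasurableSet[mα.comap G] v := hu.inter ⟨B₁, hB₁, rfl⟩
  have hv' : MeasurableSet v := hG.comap_le _ hv
  have hB : MeasurableSet (G ⁻¹' B₁ ∩ Z ⁻¹' B₂) := (hG hB₁).inter (hZ hB₂)
  set φ : Ω → ℝ := fun ω => (v.indicator w ω : ℝ≥0)
  have hφ : StronglyMeasurable[mα.comap G] φ :=
    (hw.indicator hv).coe_nnreal_real.stronglyMeasurable
  have hφC : ∀ ω, ‖φ ω‖ ≤ C := fun ω => by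
    simpa only [φ, Real.norm_eq_abs, NNReal.abs_eq, NNReal.coe_le_coe] using
      (Set.indicator_le_self v w ω).trans (hwC ω)
  have hφR : (fun ω => φ ω * (μ⟦R ⁻¹' s | mα.comap G⟧) ω) =ᵐ[μ] v.indicator 1 := by
    filter_upwards [hwR] with ω hω
    by_cases hωv : ω ∈ v
    · simpa [φ, hωv] using hω hωv.1
    · simp [φ, hωv]
  calc (μ.restrict (u ∩ R ⁻¹' s)).withDensity (fun ω => w ω) (G ⁻¹' B₁ ∩ Z ⁻¹' B₂)
      = ∫⁻ ω in R ⁻¹' s ∩ Z ⁻¹' B₂, ((v.indicator w ω : ℝ≥0) : ℝ≥0∞) ∂μ := by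
        simp only [ENNReal.coe_indicator]
        rw [withDensity_apply _ hB, Measure.restrict_restrict hB, lintegral_indicator hv',
          Measure.restrict_restrict hv']
        congr 2
        ext ω
        simp only [v, Set.mem_inter_iff, Set.mem_preimage]
        tauto
    _ = ENNReal.ofReal (∫ ω in R ⁻¹' s ∩ Z ⁻¹' B₂, φ ω ∂μ) :=
        lintegral_coe_eq_integral _ ((integrable_const (C : ℝ)).mono'
          (hφ.mono hG.comap_le).aestronglyMeasurable (.of_forall hφC))
    _ = ENNReal.ofReal (∫ ω in Z ⁻¹' B₂, v.indicator 1 ω ∂μ) := by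
        rw [setIntegral_preimage_inter_eq_of_condIndepFun hR hZ hRZ hs hB₂ hφ hφC,
          setIntegral_congr_ae (hZ hB₂) (hφR.mono fun ω hω _ => hω)]
    _ = μ.restrict u (G ⁻¹' B₁ ∩ Z ⁻¹' B₂) := by
        rw [integral_indicator_one hv', ofReal_measureReal, Measure.restrict_apply hv',
          Measure.restrict_apply hB]
        congr 1
        ext ω
        simp only [v, Set.mem_inter_iff, Set.mem_preimage]
        tauto

theorem map_withDensity_eq_map_restrict_of_condIndepFun [StandardBorelSpace Ω]
    [mα : MeasurableSpace α] [MeasurableSpace β] [MeasurableSpace γ]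
    {μ : Measure Ω} [IsFiniteMeasure μ] {G : Ω → α} {R : Ω → β} {Z : Ω → γ}
    (hG : Measurable G) (hR : Measurable R) (hZ : Measurable Z)
    (hRZ : CondIndepFun (mα.comap G) hG.comap_le R Z μ)
    {s : Set β} (hs : MeasurableSet s) {u : Set Ω} (hu : MeasurableSet[mα.comap G] u)
    {w : Ω → ℝ≥0} {C : ℝ≥0} (hw : Measurable[mα.comap G] w) (hwC : ∀ ω, w ω ≤ C)
    (hwR : ∀ᵐ ω ∂μ, ω ∈ u → (w ω : ℝ) * (μ⟦R ⁻¹' s | mα.comap G⟧) ω = 1) :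
    ((μ.restrict (u ∩ R ⁻¹' s)).withDensity fun ω => w ω).map (fun ω => (G ω, Z ω)) =
      (μ.restrict u).map (fun ω => (G ω, Z ω)) := by
  have := (μ.restrict (u ∩ R ⁻¹' s)).smul_finite (ENNReal.coe_ne_top (r := C))
  have : IsFiniteMeasure ((μ.restrict (u ∩ R ⁻¹' s)).withDensity fun ω => w ω) :=
    isFiniteMeasure_of_le _ (withDensity_le_smul_of_le hwC)
  have hGZ : Measurable fun ω => (G ω, Z ω) := hG.prodMk hZ
  refine ext_of_generate_finite _ generateFrom_prod.symm isPiSystem_prod ?_ ?_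
  · rintro _ ⟨B₁, hB₁, B₂, hB₂, rfl⟩
    rw [Measure.map_apply hGZ (hB₁.prod hB₂), Measure.map_apply hGZ (hB₁.prod hB₂)]
    exact withDensity_preimage_inter_eq_of_condIndepFun hG hR hZ hRZ hs hu hw hwC hwR hB₁ hB₂
  · rw [Measure.map_apply hGZ .univ, Measure.map_apply hGZ .univ]
    simpa using withDensity_preimage_inter_eq_of_condIndepFun hG hR hZ hRZ hs hu hw hwC hwR
      .univ .univ

theorem ae_eq_condExp_of_map_eq_smul_map_withDensity [mβ : MeasurableSpace β]
    {ν ν' : Measure Ω} [IsFiniteMeasure ν] [IsFiniteMeasure ν']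
    {X : Ω → β} {Y : Ω → ℝ} {f : β → ℝ} {h : β → ℝ≥0} {C : ℝ≥0} {c : ℝ≥0∞}
    (hX : Measurable X) (hY : Measurable Y) (hf : Measurable f) (hh : Measurable h)
    (hhC : ∀ x, h x ≤ C) (hc : c ≠ ∞) (hYint : Integrable Y ν)
    (hmap : ν'.map (fun ω => (X ω, Y ω)) =
      c • (ν.withDensity fun ω => h (X ω)).map (fun ω => (X ω, Y ω)))
    (hfY : (fun ω => f (X ω)) =ᵐ[ν] ν[Y | mβ.comap X]) :
    (fun ω => f (X ω)) =ᵐ[ν'] ν'[Y | mβ.comap X] := by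
  have hXY : Measurable fun ω => (X ω, Y ω) := hX.prodMk hY
  have hρ := withDensity_le_smul_of_le (μ := ν) fun ω => hhC (X ω)
  have integrable_of_map : ∀ F : β × ℝ → ℝ, Measurable F →
      Integrable (fun ω => F (X ω, Y ω)) ν → Integrable (fun ω => F (X ω, Y ω)) ν' := by
    intro F hF hFν
    have hFρ := (integrable_map_measure hF.aestronglyMeasurable hXY.aemeasurable).2
      ((hFν.smul_measure ENNReal.coe_ne_top).mono_measure hρ)
    refine (integrable_map_measure hF.aestronglyMeasurable hXY.aemeasurable).1 ?_
    rw [hmap]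
    exact hFρ.smul_measure hc
  have integral_eq_of_map : ∀ F : β × ℝ → ℝ, Measurable F →
      ∫ ω, F (X ω, Y ω) ∂ν' = c.toReal * ∫ ω, h (X ω) * F (X ω, Y ω) ∂ν := by
    intro F hF
    rw [← integral_map hXY.aemeasurable hF.aestronglyMeasurable, hmap, integral_smul_measure,
      integral_map hXY.aemeasurable hF.aestronglyMeasurable,
      integral_withDensity_eq_integral_smul (f := fun ω => h (X ω)) (hh.comp hX)]
    rfl
  have hfX : Integrable (fun ω => f (X ω)) ν := integrable_condExp.congr hfY.symm
  refine ae_eq_condExp_of_forall_setIntegral_eq hX.comap_le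
    (integrable_of_map (fun z => z.2) measurable_snd hYint)
    (fun s _ _ => (integrable_of_map (fun z => f z.1) (hf.comp measurable_fst) hfX).integrableOn)
    ?_ (hf.comp (comap_measurable X)).aestronglyMeasurable
  rintro _ ⟨B, hB, rfl⟩ -
  set W : Ω → ℝ := fun ω => h (X ω) * B.indicator (fun _ => 1) (X ω)
  have hW : StronglyMeasurable[mβ.comap X] W :=
    ((hh.coe_nnreal_real.mul (measurable_const.indicator hB)).comp
      (comap_measurable X)).stronglyMeasurable
  have hWC : ∀ ω, ‖W ω‖ ≤ C := fun ω => by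
    by_cases hω : X ω ∈ B <;> simp [W, hω, hhC]
  rw [setIntegral_eq_integral_mul_indicator (hX hB), setIntegral_eq_integral_mul_indicator (hX hB)]
  refine (integral_eq_of_map (fun z => f z.1 * B.indicator (fun _ => 1) z.1)
    ((hf.comp measurable_fst).mul ((measurable_const.indicator hB).comp measurable_fst))).trans
    (.trans ?_ (integral_eq_of_map (fun z => z.2 * B.indicator (fun _ => 1) z.1)
      (measurable_snd.mul ((measurable_const.indicator hB).comp measurable_fst))).symm)
  have := integral_mul_eq_of_ae_eq_condExp hX.comap_le hW hWC hYint hfY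
  simp only [W] at this
  congr 1
  convert this using 3 <;> ring

theorem map_cond_eq_smul_map_cond_withDensity [MeasurableSpace γ] [MeasurableSpace δ]
    {μ : Measure Ω} {S₀ S₁ : Set Ω} (hS₁ : μ S₁ ≠ 0) (hS₁' : μ S₁ ≠ ∞)
    {T : Ω → γ} {π : γ → δ} (hT : Measurable T) (hπ : Measurable π) {w : Ω → ℝ≥0∞}
    (hmap : ((μ.restrict S₁).withDensity w).map T = (μ.restrict S₀).map T) :
    μ[|S₀].map (π ∘ T) = ((μ S₀)⁻¹ * μ S₁) • (μ[|S₁].withDensity w).map (π ∘ T) := by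
  simp only [ProbabilityTheory.cond, withDensity_smul_measure, Measure.map_smul, smul_smul]
  rw [← Measure.map_map hπ hT, ← Measure.map_map hπ hT, ← hmap, mul_assoc,
    ENNReal.mul_inv_cancel hS₁ hS₁', mul_one]

end

theorem indicator_preimage_one_eq_self {Ω : Type*} {R : Ω → ℝ} (hR : ∀ ω, R ω = 0 ∨ R ω = 1) :
    (R ⁻¹' {1}).indicator (fun _ => (1 : ℝ)) = R :=
  funext fun ω => by rcases hR ω with h | h <;> simp [h]

theorem stmt_3_general
    {Ω : Type*} [𝓕 : MeasurableSpace Ω] [StandardBorelSpace Ω]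
    (μ : Measure Ω) [IsProbabilityMeasure μ]
    {p q : ℕ}
    (Lstar : Ω → Fin p → ℝ) (L : Ω → Fin q → ℝ) (A R Y : Ω → ℝ)
    (hLstar : Measurable Lstar) (hL : Measurable L)
    (hA : Measurable A) (hR : Measurable R) (hY : Measurable Y)
    (hR01 : ∀ ω, R ω = 0 ∨ R ω = 1)
    (hY2 : MemLp Y 2 μ)
    -- Assumption A4 (MAR): R ⫫ (L, Y) | σ(L*, A)
    (hMAR : CondIndepFun (MeasurableSpace.comap (fun ω => (Lstar ω, A ω)) inferInstance)
      ((hLstar.prodMk hA).comap_le) R (fun ω => (L ω, Y ω)) μ)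
    -- Assumption A5 (missingness positivity)
    (η : (Fin p → ℝ) → ℝ → ℝ) (hη : Measurable (Function.uncurry η))
    (hηver : (fun ω => η (Lstar ω) (A ω)) =ᵐ[μ]
      μ[R|MeasurableSpace.comap (fun ω => (Lstar ω, A ω)) inferInstance])
    (ε₀ : ℝ) (hε₀ : 0 < ε₀)
    (hηpos : ∀ᵐ ω ∂μ, ε₀ ≤ η (Lstar ω) 0 ∧ ε₀ ≤ η (Lstar ω) 1)
    (hAR : 0 < μ {ω | A ω = 0 ∧ R ω = 1})
    (m : (Fin p → ℝ) → (Fin q → ℝ) → ℝ) (hm : Measurable (Function.uncurry m))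
    (hmver : (fun ω => m (Lstar ω) (L ω)) =ᵐ[μ[|{ω | A ω = 0 ∧ R ω = 1}]]
      (μ[|{ω | A ω = 0 ∧ R ω = 1}])[Y|MeasurableSpace.comap
          (fun ω => (Lstar ω, L ω)) inferInstance]) :
    (fun ω => m (Lstar ω) (L ω)) =ᵐ[μ[|{ω | A ω = 0}]]
      (μ[|{ω | A ω = 0}])[Y|MeasurableSpace.comap
          (fun ω => (Lstar ω, L ω)) inferInstance] := by
  set S₀ : Set Ω := {ω | A ω = 0}
  set S₁ : Set Ω := {ω | A ω = 0 ∧ R ω = 1}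
  have hS₁ : μ S₁ ≠ 0 := hAR.ne'
  have hS₀ : μ S₀ ≠ 0 := fun h => hS₁ (measure_mono_null (fun ω hω => hω.1) h)
  -- capped at `ε₀` so that the weight is bounded everywhere, not only almost everywhere
  let w : (Fin p → ℝ) → ℝ≥0 := fun x => (max (η x 0) ε₀).toNNReal⁻¹
  have hw : Measurable w :=
    ((hη.comp (measurable_id.prodMk measurable_const)).max measurable_const).real_toNNReal.inv
  have hwC : ∀ x, w x ≤ ε₀.toNNReal⁻¹ := fun x =>
    inv_anti₀ (by positivity) (Real.toNNReal_le_toNNReal (le_max_right _ _))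
  have hwR : ∀ᵐ ω ∂μ, ω ∈ S₀ → (w (Lstar ω) : ℝ) *
      (μ⟦R ⁻¹' {1} | MeasurableSpace.comap (fun ω => (Lstar ω, A ω)) inferInstance⟧) ω = 1 := by
    rw [indicator_preimage_one_eq_self hR01]
    filter_upwards [hηver, hηpos] with ω hω hpos hA0
    rw [← hω, show A ω = 0 from hA0]
    have := hε₀.trans_le hpos.1
    simp [w, max_eq_left hpos.1, this.le, this.ne']
  have hmap : ((μ.restrict S₁).withDensity fun ω => w (Lstar ω)).map
        (fun ω => ((Lstar ω, A ω), (L ω, Y ω))) =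
      (μ.restrict S₀).map (fun ω => ((Lstar ω, A ω), (L ω, Y ω))) :=
    map_withDensity_eq_map_restrict_of_condIndepFun (hLstar.prodMk hA) hR (hL.prodMk hY) hMAR
      (measurableSet_singleton 1)
      ⟨Prod.snd ⁻¹' {0}, measurable_snd (measurableSet_singleton 0), rfl⟩
      ((hw.comp measurable_fst).comp (comap_measurable _)) (fun ω => hwC _) hwR
  exact ae_eq_condExp_of_map_eq_smul_map_withDensity (hLstar.prodMk hL) hY hm
    (hw.comp measurable_fst) (fun x => hwC x.1) (ν := μ[|S₁]) (ν' := μ[|S₀])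
    (ENNReal.mul_ne_top (ENNReal.inv_ne_top.2 hS₀) (measure_ne_top μ S₁))
    ((hY2.integrable one_le_two).restrict.smul_measure (ENNReal.inv_ne_top.2 hS₁))
    (map_cond_eq_smul_map_cond_withDensity hS₁ (measure_ne_top μ S₁)
      ((hLstar.prodMk hA).prodMk (hL.prodMk hY)) (π := fun z => ((z.1.1, z.2.1), z.2.2))
      (by fun_prop) hmap) hmver

/-- Under MAR, the complete-case outcome regression among untreated subjects coincides with
the full-data outcome regression among untreated subjects. -/
theorem stmt_3
    {Ω : Type*} [𝓕 : MeasurableSpace Ω] [StandardBorelSpace Ω] [Nonempty Ω]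
    (μ : Measure Ω) [IsProbabilityMeasure μ]
    {p q : ℕ}
    (Lstar : Ω → Fin p → ℝ) (L : Ω → Fin q → ℝ) (A R Y : Ω → ℝ)
    (hLstar : Measurable Lstar) (hL : Measurable L)
    (hA : Measurable A) (hR : Measurable R) (hY : Measurable Y)
    (hA01 : ∀ ω, A ω = 0 ∨ A ω = 1) (hR01 : ∀ ω, R ω = 0 ∨ R ω = 1)
    (hY2 : MemLp Y 2 μ)
    (g : (Fin q → ℝ) → ℝ → ℝ) (hg : Measurable (Function.uncurry g))
    (hg01 : ∀ x a, g x a = 0 ∨ g x a = 1)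
    -- Assumption A4 (MAR): R ⫫ (L, Y) | σ(L*, A)
    (hMAR : CondIndepFun (MeasurableSpace.comap (fun ω => (Lstar ω, A ω)) inferInstance)
      ((hLstar.prodMk hA).comap_le) R (fun ω => (L ω, Y ω)) μ)
    -- Assumption A5 (missingness positivity)
    (η : (Fin p → ℝ) → ℝ → ℝ) (hη : Measurable (Function.uncurry η))
    (hηver : (fun ω => η (Lstar ω) (A ω)) =ᵐ[μ]
      μ[R|MeasurableSpace.comap (fun ω => (Lstar ω, A ω)) inferInstance])
    (ε₀ : ℝ) (hε₀ : 0 < ε₀)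
    (hηpos : ∀ᵐ ω ∂μ, ε₀ ≤ η (Lstar ω) 0 ∧ ε₀ ≤ η (Lstar ω) 1)
    (hAR : 0 < μ {ω | A ω = 0 ∧ R ω = 1})
    (m : (Fin p → ℝ) → (Fin q → ℝ) → ℝ) (hm : Measurable (Function.uncurry m))
    (hmver : (fun ω => m (Lstar ω) (L ω)) =ᵐ[μ[|{ω | A ω = 0 ∧ R ω = 1}]]
      (μ[|{ω | A ω = 0 ∧ R ω = 1}])[Y|MeasurableSpace.comap
          (fun ω => (Lstar ω, L ω)) inferInstance]) :
    (fun ω => m (Lstar ω) (L ω)) =ᵐ[μ[|{ω | A ω = 0}]]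
      (μ[|{ω | A ω = 0}])[Y|MeasurableSpace.comap
          (fun ω => (Lstar ω, L ω)) inferInstance] :=
  stmt_3_general (𝓕 := 𝓕) μ Lstar L A R Y hLstar hL hA hR hY hR01 hY2 hMAR η hη hηver ε₀ hε₀ hηpos
    hAR m hm hmver
end

section
/- Under the setup and Assumptions A4 and A5, let μ₀ : ℝ^p × ℝ^q → ℝ be any measurable function with μ₀(L*, L) square-integrable under μ, and let ε₁, ξ : ℝ^p × ℝ → ℝ be measurable functions such that, under μ(·|{A = 1, R = 1}), ε₁(L*, Y) is a version of E[E | σ(L*, Y)] and ξ(L*, Y) is a version of E[E·μ₀(L*, L) | σ(L*, Y)]. Then E[A·R·E/η₁(L*)] = E[A·ε₁(L*, Y)] and E[(A·R·E/η₁(L*))·(Y − μ₀(L*, L))] = E[A·(ε₁(L*, Y)·Y − ξ(L*, Y))]. -/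
open MeasureTheory ProbabilityTheory
open scoped ENNReal ProbabilityTheory

/-!
On the treated complete cases `S = {A = 1, R = 1}` both the weight `1 / η₁(L*)` and `Y` are
functions of `(L*, Y)`, so under `μ(·|S)` conditioning on `(L*, Y)` replaces `E` by `ε₁` and
`E·μ₀` by `ξ`. Missingness at random then removes the restriction to complete cases: since
`R ⫫ (L, Y) | (L*, A)`, the measures `R·μ` and `η(L*, A)·μ` have the same image under
`(L*, A, L, Y)` (on rectangles this is
`E[R·1{(L, Y) ∈ t} | L*, A] = η(L*, A)·P((L, Y) ∈ t | L*, A)`), hence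
`E[A R φ(L*, Y) / η₁(L*)] = E[A φ(L*, Y)]` for every `φ`.
-/

section Tower

variable {Ω : Type*} {m mΩ : MeasurableSpace Ω} {μ : Measure Ω} {h X : Ω → ℝ}

theorem integral_mul_condExp_of_stronglyMeasurable_left (hm : m ≤ mΩ)
    [SigmaFinite (μ.trim hm)] (hh : StronglyMeasurable[m] h) (hhX : Integrable (h * X) μ)
    (hX : Integrable X μ) :
    ∫ ω, h ω * μ[X|m] ω ∂μ = ∫ ω, h ω * X ω ∂μ :=
  calc ∫ ω, h ω * μ[X|m] ω ∂μ = ∫ ω, μ[h * X|m] ω ∂μ :=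
        integral_congr_ae (condExp_mul_of_stronglyMeasurable_left hh hhX hX).symm
    _ = ∫ ω, h ω * X ω ∂μ := integral_condExp hm

theorem integrable_mul_condExp_of_stronglyMeasurable_left (hh : StronglyMeasurable[m] h)
    (hhX : Integrable (h * X) μ) (hX : Integrable X μ) :
    Integrable (h * μ[X|m]) μ :=
  integrable_condExp.congr (condExp_mul_of_stronglyMeasurable_left hh hhX hX)

end Tower

section BoundedWeight

variable {Ω : Type*} {m mΩ : MeasurableSpace Ω} {μ : Measure Ω} [IsFiniteMeasure μ]
  {w X e : Ω → ℝ} {C : ℝ}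

theorem integral_mul_eq_of_ae_eq_condExp_s6 (hm : m ≤ mΩ) (hw : StronglyMeasurable[m] w)
    (hwC : ∀ᵐ ω ∂μ, ‖w ω‖ ≤ C) (hX : AEStronglyMeasurable X μ) (hX1 : ∀ᵐ ω ∂μ, ‖X ω‖ ≤ 1)
    (he : e =ᵐ[μ] μ[X|m]) :
    ∫ ω, X ω * w ω ∂μ = ∫ ω, e ω * w ω ∂μ := by
  have hXi : Integrable X μ := .of_bound hX 1 hX1
  calc ∫ ω, X ω * w ω ∂μ = ∫ ω, w ω * μ[X|m] ω ∂μ := by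
        rw [integral_mul_condExp_of_stronglyMeasurable_left hm hw
          (hXi.bdd_mul (hw.mono hm).aestronglyMeasurable hwC) hXi]
        simp_rw [mul_comm]
    _ = ∫ ω, e ω * w ω ∂μ :=
        integral_congr_ae (by filter_upwards [he] with ω h; rw [h, mul_comm])

theorem integral_mul_sub_mul_eq_of_ae_eq_condExp {Y M x : Ω → ℝ} (hm : m ≤ mΩ)
    (hw : StronglyMeasurable[m] w) (hwC : ∀ᵐ ω ∂μ, ‖w ω‖ ≤ C) (hX : AEStronglyMeasurable X μ)
    (hX1 : ∀ᵐ ω ∂μ, ‖X ω‖ ≤ 1) (hY : StronglyMeasurable[m] Y) (hYi : Integrable Y μ)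
    (hM : Integrable M μ) (he : e =ᵐ[μ] μ[X|m]) (hx : x =ᵐ[μ] μ[fun ω => X ω * M ω|m]) :
    ∫ ω, X ω * (Y ω - M ω) * w ω ∂μ = ∫ ω, (e ω * Y ω - x ω) * w ω ∂μ := by
  have hXi : Integrable X μ := .of_bound hX 1 hX1
  have hwX : ∀ᵐ ω ∂μ, ‖w ω * X ω‖ ≤ C := by
    filter_upwards [hwC, hX1] with ω h₁ h₂
    rw [norm_mul]
    nlinarith [norm_nonneg (w ω), norm_nonneg (X ω)]
  have hwXm : AEStronglyMeasurable (fun ω => w ω * X ω) μ :=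
    (hw.mono hm).aestronglyMeasurable.mul hX
  have hXM : Integrable (fun ω => X ω * M ω) μ := hM.bdd_mul hX hX1
  have hwXY : Integrable ((w * Y) * X) μ :=
    (hYi.bdd_mul hwXm hwX).congr (ae_of_all _ fun ω => by simp only [Pi.mul_apply]; ring)
  have hwXM : Integrable (w * fun ω => X ω * M ω) μ :=
    (hM.bdd_mul hwXm hwX).congr (ae_of_all _ fun ω => by simp only [Pi.mul_apply]; ring)
  have h₁ := integral_mul_condExp_of_stronglyMeasurable_left hm (hw.mul hY) hwXY hXi
  have h₂ := integral_mul_condExp_of_stronglyMeasurable_left hm hw hwXM hXM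
  have i₁ := integrable_mul_condExp_of_stronglyMeasurable_left (hw.mul hY) hwXY hXi
  have i₂ := integrable_mul_condExp_of_stronglyMeasurable_left hw hwXM hXM
  calc ∫ ω, X ω * (Y ω - M ω) * w ω ∂μ
      = ∫ ω, (w * Y) ω * X ω ∂μ - ∫ ω, w ω * (X ω * M ω) ∂μ := by
        refine (integral_congr_ae (ae_of_all _ fun ω => ?_)).trans (integral_sub hwXY hwXM)
        simp only [Pi.mul_apply]
        ring
    _ = ∫ ω, (w * Y) ω * μ[X|m] ω ∂μ - ∫ ω, w ω * μ[fun ω => X ω * M ω|m] ω ∂μ := by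
        rw [h₁, h₂]
    _ = ∫ ω, (e ω * Y ω - x ω) * w ω ∂μ := by
        refine (integral_sub i₁ i₂).symm.trans (integral_congr_ae ?_)
        filter_upwards [he, hx] with ω h h'
        simp only [Pi.mul_apply, h, h']
        ring

end BoundedWeight

section Cond

variable {Ω : Type*} {mΩ : MeasurableSpace Ω} {μ : Measure Ω} {s : Set Ω}

theorem MeasureTheory.Integrable.cond {f : Ω → ℝ} (hf : Integrable f μ) :
    Integrable f μ[|s] := by
  by_cases hs : μ s = 0
  · simp [ProbabilityTheory.cond, Measure.restrict_eq_zero.mpr hs]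
  · exact hf.restrict.smul_measure (ENNReal.inv_ne_top.2 hs)

theorem setIntegral_eq_measureReal_mul_integral_cond [IsFiniteMeasure μ] (f : Ω → ℝ) :
    ∫ ω in s, f ω ∂μ = μ.real s * ∫ ω, f ω ∂μ[|s] := by
  by_cases hs : μ s = 0
  · simp [Measure.restrict_eq_zero.mpr hs, measureReal_def, hs]
  · rw [ProbabilityTheory.cond, integral_smul_measure, ENNReal.toReal_inv, smul_eq_mul,
      ← mul_assoc, measureReal_def,
      mul_inv_cancel₀ (ENNReal.toReal_ne_zero.2 ⟨hs, measure_ne_top μ s⟩), one_mul]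

theorem integral_mul_mul_eq_measureReal_mul_integral_cond [IsFiniteMeasure μ] {A R : Ω → ℝ}
    (hA : Measurable A) (hR : Measurable R) (hA01 : ∀ ω, A ω = 0 ∨ A ω = 1)
    (hR01 : ∀ ω, R ω = 0 ∨ R ω = 1) (F : Ω → ℝ) :
    ∫ ω, A ω * R ω * F ω ∂μ
      = μ.real {ω | A ω = 1 ∧ R ω = 1} * ∫ ω, F ω ∂μ[|{ω | A ω = 1 ∧ R ω = 1}] := by
  have hS : MeasurableSet {ω | A ω = 1 ∧ R ω = 1} :=
    (hA (measurableSet_singleton 1)).inter (hR (measurableSet_singleton 1))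
  rw [← setIntegral_eq_measureReal_mul_integral_cond, ← integral_indicator hS]
  congr 1 with ω
  rcases hA01 ω with h | h <;> rcases hR01 ω with h' | h' <;> simp [h, h']

end Cond

section WithDensity

variable {Ω β : Type*} {mΩ : MeasurableSpace Ω} {mβ : MeasurableSpace β} {μ : Measure Ω}
  {T : Ω → β}

theorem integral_mul_eq_integral_map_withDensity {v : Ω → ℝ} (hv : Measurable v)
    (hv0 : 0 ≤ᵐ[μ] v) (hT : Measurable T) {f : β → ℝ} (hf : Measurable f) :
    ∫ ω, v ω * f (T ω) ∂μ
      = ∫ x, f x ∂(μ.withDensity fun ω => ENNReal.ofReal (v ω)).map T := by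
  rw [integral_map hT.aemeasurable hf.aestronglyMeasurable,
    integral_withDensity_eq_integral_toReal_smul hv.ennreal_ofReal
      (ae_of_all _ fun _ => ENNReal.ofReal_lt_top)]
  refine integral_congr_ae ?_
  filter_upwards [hv0] with ω h
  rw [ENNReal.toReal_ofReal h, smul_eq_mul]

end WithDensity

section MissingAtRandom

variable {Ω β γ : Type*} {mΩ : MeasurableSpace Ω} [StandardBorelSpace Ω]
  {mβ : MeasurableSpace β} {mγ : MeasurableSpace γ} {μ : Measure Ω} [IsFiniteMeasure μ]
  {Z : Ω → β} {W : Ω → γ} {R : Ω → ℝ}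

theorem setIntegral_preimage_inter_eq_condExp_of_condIndepFun (hZ : Measurable Z)
    (hW : Measurable W) (hR : Measurable R) (hR01 : ∀ ω, R ω = 0 ∨ R ω = 1)
    (hCI : CondIndepFun (mβ.comap Z) hZ.comap_le R W μ) {s : Set β} {t : Set γ}
    (hs : MeasurableSet s) (ht : MeasurableSet t) :
    ∫ ω in Z ⁻¹' s ∩ W ⁻¹' t, R ω ∂μ = ∫ ω in Z ⁻¹' s ∩ W ⁻¹' t, μ[R|mβ.comap Z] ω ∂μ := by
  have hm : mβ.comap Z ≤ mΩ := hZ.comap_le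
  have hU : MeasurableSet[mβ.comap Z] (Z ⁻¹' s) := ⟨s, hs, rfl⟩
  have hV : MeasurableSet (W ⁻¹' t) := hW ht
  have hR_ind : R = (R ⁻¹' {1}).indicator fun _ => 1 := by
    funext ω; rcases hR01 ω with h | h <;> simp [h]
  have hRint : Integrable R μ := by
    rw [hR_ind]; exact (integrable_const 1).indicator (hR (measurableSet_singleton 1))
  have hRV : (W ⁻¹' t).indicator R = (R ⁻¹' {1} ∩ W ⁻¹' t).indicator fun _ => 1 := by
    funext ω
    by_cases hω : ω ∈ W ⁻¹' t <;> rcases hR01 ω with h | h <;> simp [hω, h]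
  have hcondR :
      μ[R|mβ.comap Z] * (W ⁻¹' t).indicator 1 = (W ⁻¹' t).indicator μ[R|mβ.comap Z] := by
    funext ω; by_cases hω : ω ∈ W ⁻¹' t <;> simp [hω]
  have hsplit : μ[(W ⁻¹' t).indicator R|mβ.comap Z]
      =ᵐ[μ] μ[R|mβ.comap Z] * μ[(W ⁻¹' t).indicator 1|mβ.comap Z] := by
    have := (condIndepFun_iff_condExp_inter_preimage_eq_mul hR hW).mp hCI {1} t
      (measurableSet_singleton 1) ht
    rwa [← hR_ind, ← hRV] at this
  have hpull : μ[(W ⁻¹' t).indicator μ[R|mβ.comap Z]|mβ.comap Z]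
      =ᵐ[μ] μ[R|mβ.comap Z] * μ[(W ⁻¹' t).indicator 1|mβ.comap Z] := by
    rw [← hcondR]
    exact condExp_mul_of_stronglyMeasurable_left stronglyMeasurable_condExp
      (hcondR ▸ integrable_condExp.indicator hV) ((integrable_const 1).indicator hV)
  calc ∫ ω in Z ⁻¹' s ∩ W ⁻¹' t, R ω ∂μ
      = ∫ ω in Z ⁻¹' s, μ[(W ⁻¹' t).indicator R|mβ.comap Z] ω ∂μ := by
        rw [setIntegral_condExp hm (hRint.indicator hV) hU, setIntegral_indicator hV]
    _ = ∫ ω in Z ⁻¹' s, μ[(W ⁻¹' t).indicator μ[R|mβ.comap Z]|mβ.comap Z] ω ∂μ :=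
        setIntegral_congr_ae (hm _ hU) (by
          filter_upwards [hsplit, hpull] with ω h₁ h₂ _ using h₁.trans h₂.symm)
    _ = ∫ ω in Z ⁻¹' s ∩ W ⁻¹' t, μ[R|mβ.comap Z] ω ∂μ := by
        rw [setIntegral_condExp hm (integrable_condExp.indicator hV) hU, setIntegral_indicator hV]


theorem map_withDensity_eq_of_condIndepFun (hZ : Measurable Z)
    (hW : Measurable W) (hR : Measurable R) (hR01 : ∀ ω, R ω = 0 ∨ R ω = 1)
    (hCI : CondIndepFun (mβ.comap Z) hZ.comap_le R W μ) :
    (μ.withDensity fun ω => ENNReal.ofReal (R ω)).map (fun ω => (Z ω, W ω))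
      = (μ.withDensity fun ω => ENNReal.ofReal (μ[R|mβ.comap Z] ω)).map
          (fun ω => (Z ω, W ω)) := by
  have hRint : Integrable R μ :=
    (integrable_const 1).mono' hR.aestronglyMeasurable
      (ae_of_all _ fun ω => by rcases hR01 ω with h | h <;> simp [h])
  have := isFiniteMeasure_withDensity_ofReal hRint.2
  refine Measure.ext_prod fun {s t} hs ht => ?_
  have hst : MeasurableSet (Z ⁻¹' s ∩ W ⁻¹' t) := (hZ hs).inter (hW ht)
  rw [Measure.map_apply (hZ.prodMk hW) (hs.prod ht), Measure.map_apply (hZ.prodMk hW) (hs.prod ht),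
    Set.mk_preimage_prod, withDensity_apply _ hst, withDensity_apply _ hst,
    ← ofReal_integral_eq_lintegral_ofReal hRint.integrableOn
      (ae_of_all _ fun ω => by rcases hR01 ω with h | h <;> simp [h]),
    ← ofReal_integral_eq_lintegral_ofReal integrable_condExp.integrableOn
      (ae_restrict_of_ae (condExp_nonneg (ae_of_all _ fun ω => by
        rcases hR01 ω with h | h <;> simp [h]))),
    setIntegral_preimage_inter_eq_condExp_of_condIndepFun hZ hW hR hR01 hCI hs ht]

theorem integral_mul_comp_eq_condExp_mul_of_condIndepFun (hZ : Measurable Z)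
    (hW : Measurable W) (hR : Measurable R) (hR01 : ∀ ω, R ω = 0 ∨ R ω = 1)
    (hCI : CondIndepFun (mβ.comap Z) hZ.comap_le R W μ) {f : β × γ → ℝ} (hf : Measurable f) :
    ∫ ω, R ω * f (Z ω, W ω) ∂μ = ∫ ω, μ[R|mβ.comap Z] ω * f (Z ω, W ω) ∂μ := by
  have hR0 : 0 ≤ᵐ[μ] R := ae_of_all _ fun ω => by rcases hR01 ω with h | h <;> simp [h]
  rw [integral_mul_eq_integral_map_withDensity hR hR0 (hZ.prodMk hW) hf,
    integral_mul_eq_integral_map_withDensity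
      (stronglyMeasurable_condExp.measurable.mono hZ.comap_le le_rfl) (condExp_nonneg hR0)
      (hZ.prodMk hW) hf,
    map_withDensity_eq_of_condIndepFun hZ hW hR hR01 hCI]

theorem integral_mul_mul_inv_eq_integral_mul_of_condIndepFun {X : Ω → β} {A : Ω → ℝ}
    (hX : Measurable X) (hA : Measurable A) (hW : Measurable W) (hR : Measurable R)
    (hA01 : ∀ ω, A ω = 0 ∨ A ω = 1) (hR01 : ∀ ω, R ω = 0 ∨ R ω = 1)
    (hCI : CondIndepFun (MeasurableSpace.comap (fun ω => (X ω, A ω)) inferInstance)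
      (hX.prodMk hA).comap_le R W μ)
    {η : β → ℝ → ℝ} (hη : Measurable (Function.uncurry η))
    (hηver : (fun ω => η (X ω) (A ω)) =ᵐ[μ]
      μ[R|MeasurableSpace.comap (fun ω => (X ω, A ω)) inferInstance])
    (hη1 : ∀ᵐ ω ∂μ, η (X ω) 1 ≠ 0) {φ : β → γ → ℝ} (hφ : Measurable (Function.uncurry φ)) :
    ∫ ω, A ω * R ω * (φ (X ω) (W ω) * (η (X ω) 1)⁻¹) ∂μ = ∫ ω, A ω * φ (X ω) (W ω) ∂μ := by
  have hF : Measurable fun z : (β × ℝ) × γ => z.1.2 * (φ z.1.1 z.2 * (η z.1.1 1)⁻¹) := by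
    have h₁ : Measurable fun z : (β × ℝ) × γ => z.1.1 := measurable_fst.comp measurable_fst
    exact (measurable_snd.comp measurable_fst).mul
      ((hφ.comp (h₁.prodMk measurable_snd)).mul (hη.comp (h₁.prodMk measurable_const)).inv)
  calc ∫ ω, A ω * R ω * (φ (X ω) (W ω) * (η (X ω) 1)⁻¹) ∂μ
      = ∫ ω, R ω * (A ω * (φ (X ω) (W ω) * (η (X ω) 1)⁻¹)) ∂μ := by
        congr 1 with ω; ring
    _ = ∫ ω, η (X ω) (A ω) * (A ω * (φ (X ω) (W ω) * (η (X ω) 1)⁻¹)) ∂μ := by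
        rw [integral_mul_comp_eq_condExp_mul_of_condIndepFun (hX.prodMk hA) hW hR hR01 hCI hF]
        refine integral_congr_ae ?_
        filter_upwards [hηver] with ω h
        rw [h]
    _ = ∫ ω, A ω * φ (X ω) (W ω) ∂μ := by
        refine integral_congr_ae ?_
        filter_upwards [hη1] with ω h
        rcases hA01 ω with hA0 | hA1
        · simp [hA0]
        · rw [hA1]; field_simp

end MissingAtRandom

theorem stmt_6_general
    {Ω : Type*} [𝓕 : MeasurableSpace Ω] [StandardBorelSpace Ω]
    (μ : Measure Ω) [IsProbabilityMeasure μ]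
    {p q : ℕ}
    (Lstar : Ω → Fin p → ℝ) (L : Ω → Fin q → ℝ) (A R Y : Ω → ℝ)
    (hLstar : Measurable Lstar) (hL : Measurable L)
    (hA : Measurable A) (hR : Measurable R) (hY : Measurable Y)
    (hA01 : ∀ ω, A ω = 0 ∨ A ω = 1) (hR01 : ∀ ω, R ω = 0 ∨ R ω = 1)
    (hY2 : MemLp Y 2 μ)
    (g : (Fin q → ℝ) → ℝ → ℝ) (hg : Measurable (Function.uncurry g))
    (hg01 : ∀ x a, g x a = 0 ∨ g x a = 1)
    -- Assumption A4 (MAR): R ⫫ (L, Y) | σ(L*, A)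
    (hMAR : CondIndepFun (MeasurableSpace.comap (fun ω => (Lstar ω, A ω)) inferInstance)
      ((hLstar.prodMk hA).comap_le) R (fun ω => (L ω, Y ω)) μ)
    -- Assumption A5 (missingness positivity)
    (η : (Fin p → ℝ) → ℝ → ℝ) (hη : Measurable (Function.uncurry η))
    (hηver : (fun ω => η (Lstar ω) (A ω)) =ᵐ[μ]
      μ[R|MeasurableSpace.comap (fun ω => (Lstar ω, A ω)) inferInstance])
    (ε₀ : ℝ) (hε₀ : 0 < ε₀)
    (hηpos : ∀ᵐ ω ∂μ, ε₀ ≤ η (Lstar ω) 0 ∧ ε₀ ≤ η (Lstar ω) 1)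
    (μ₀ : (Fin p → ℝ) → (Fin q → ℝ) → ℝ)
    (hμ₀2 : MemLp (fun ω => μ₀ (Lstar ω) (L ω)) 2 μ)
    (ε₁f ξ : (Fin p → ℝ) → ℝ → ℝ)
    (hε₁f : Measurable (Function.uncurry ε₁f)) (hξ : Measurable (Function.uncurry ξ))
    (hε₁ver : (fun ω => ε₁f (Lstar ω) (Y ω)) =ᵐ[μ[|{ω | A ω = 1 ∧ R ω = 1}]]
      (μ[|{ω | A ω = 1 ∧ R ω = 1}])[(fun ω => g (L ω) (A ω))|MeasurableSpace.comap
          (fun ω => (Lstar ω, Y ω)) inferInstance])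
    (hξver : (fun ω => ξ (Lstar ω) (Y ω)) =ᵐ[μ[|{ω | A ω = 1 ∧ R ω = 1}]]
      (μ[|{ω | A ω = 1 ∧ R ω = 1}])[(fun ω => g (L ω) (A ω) * μ₀ (Lstar ω) (L ω))|
        MeasurableSpace.comap (fun ω => (Lstar ω, Y ω)) inferInstance]) :
    (∫ ω, A ω * R ω * g (L ω) (A ω) / η (Lstar ω) 1 ∂μ
        = ∫ ω, A ω * ε₁f (Lstar ω) (Y ω) ∂μ) ∧
    (∫ ω, (A ω * R ω * g (L ω) (A ω) / η (Lstar ω) 1) * (Y ω - μ₀ (Lstar ω) (L ω)) ∂μ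
        = ∫ ω, A ω * (ε₁f (Lstar ω) (Y ω) * Y ω - ξ (Lstar ω) (Y ω)) ∂μ) := by
  have hAR := integral_mul_mul_eq_measureReal_mul_integral_cond (μ := μ) hA hR hA01 hR01
  have hη1 : ∀ᵐ ω ∂μ, η (Lstar ω) 1 ≠ 0 := hηpos.mono fun ω h => (hε₀.trans_le h.2).ne'
  have ipw (φ : (Fin p → ℝ) → ℝ → ℝ) := integral_mul_mul_inv_eq_integral_mul_of_condIndepFun
    hLstar hA hY hR hA01 hR01 (hMAR.comp measurable_id measurable_snd) hη hηver hη1 (φ := φ)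
  have hm := (hLstar.prodMk hY).comap_le
  have hw : StronglyMeasurable[MeasurableSpace.comap (fun ω => (Lstar ω, Y ω)) inferInstance]
      fun ω => (η (Lstar ω) 1)⁻¹ :=
    ((hη.comp (measurable_fst.prodMk measurable_const)).inv.comp
      (comap_measurable _)).stronglyMeasurable
  have hYm : StronglyMeasurable[MeasurableSpace.comap (fun ω => (Lstar ω, Y ω)) inferInstance]
      Y := (measurable_snd.comp (comap_measurable _)).stronglyMeasurable
  have hwC : ∀ᵐ ω ∂μ[|{ω | A ω = 1 ∧ R ω = 1}], ‖(η (Lstar ω) 1)⁻¹‖ ≤ ε₀⁻¹ :=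
    cond_absolutelyContinuous.ae_le <| hηpos.mono fun ω h => by
      rw [norm_inv, Real.norm_of_nonneg (hε₀.le.trans h.2)]
      exact inv_anti₀ hε₀ h.2
  have hgm : AEStronglyMeasurable (fun ω => g (L ω) (A ω)) μ[|{ω | A ω = 1 ∧ R ω = 1}] :=
    (hg.comp (hL.prodMk hA)).aestronglyMeasurable
  have hg1 : ∀ᵐ ω ∂μ[|{ω | A ω = 1 ∧ R ω = 1}], ‖g (L ω) (A ω)‖ ≤ 1 :=
    ae_of_all _ fun ω => by rcases hg01 (L ω) (A ω) with h | h <;> simp [h]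
  constructor
  · calc _ = ∫ ω, A ω * R ω * (g (L ω) (A ω) * (η (Lstar ω) 1)⁻¹) ∂μ := by
          congr 1 with ω; ring
      _ = ∫ ω, A ω * R ω * (ε₁f (Lstar ω) (Y ω) * (η (Lstar ω) 1)⁻¹) ∂μ := by
          rw [hAR, hAR, integral_mul_eq_of_ae_eq_condExp_s6 hm hw hwC hgm hg1 hε₁ver]
      _ = _ := ipw ε₁f hε₁f
  · calc _ = ∫ ω, A ω * R ω * (g (L ω) (A ω) * (Y ω - μ₀ (Lstar ω) (L ω))
            * (η (Lstar ω) 1)⁻¹) ∂μ := by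
          congr 1 with ω; ring
      _ = ∫ ω, A ω * R ω * ((ε₁f (Lstar ω) (Y ω) * Y ω - ξ (Lstar ω) (Y ω))
            * (η (Lstar ω) 1)⁻¹) ∂μ := by
          rw [hAR, hAR, integral_mul_sub_mul_eq_of_ae_eq_condExp hm hw hwC hgm hg1 hYm
            (hY2.integrable one_le_two).cond (hμ₀2.integrable one_le_two).cond hε₁ver hξver]
      _ = _ := ipw (fun x y => ε₁f x y * y - ξ x y) ((hε₁f.mul measurable_snd).sub hξ)

/-- Reparametrization of α(P) and β(P) through the nested nuisance functions
ε₁ and ξ conditioned on (L*, Y) among treated complete cases. -/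
theorem stmt_6
    {Ω : Type*} [𝓕 : MeasurableSpace Ω] [StandardBorelSpace Ω] [Nonempty Ω]
    (μ : Measure Ω) [IsProbabilityMeasure μ]
    {p q : ℕ}
    (Lstar : Ω → Fin p → ℝ) (L : Ω → Fin q → ℝ) (A R Y : Ω → ℝ)
    (hLstar : Measurable Lstar) (hL : Measurable L)
    (hA : Measurable A) (hR : Measurable R) (hY : Measurable Y)
    (hA01 : ∀ ω, A ω = 0 ∨ A ω = 1) (hR01 : ∀ ω, R ω = 0 ∨ R ω = 1)
    (hY2 : MemLp Y 2 μ)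
    (g : (Fin q → ℝ) → ℝ → ℝ) (hg : Measurable (Function.uncurry g))
    (hg01 : ∀ x a, g x a = 0 ∨ g x a = 1)
    -- Assumption A4 (MAR): R ⫫ (L, Y) | σ(L*, A)
    (hMAR : CondIndepFun (MeasurableSpace.comap (fun ω => (Lstar ω, A ω)) inferInstance)
      ((hLstar.prodMk hA).comap_le) R (fun ω => (L ω, Y ω)) μ)
    -- Assumption A5 (missingness positivity)
    (η : (Fin p → ℝ) → ℝ → ℝ) (hη : Measurable (Function.uncurry η))
    (hηver : (fun ω => η (Lstar ω) (A ω)) =ᵐ[μ]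
      μ[R|MeasurableSpace.comap (fun ω => (Lstar ω, A ω)) inferInstance])
    (ε₀ : ℝ) (hε₀ : 0 < ε₀)
    (hηpos : ∀ᵐ ω ∂μ, ε₀ ≤ η (Lstar ω) 0 ∧ ε₀ ≤ η (Lstar ω) 1)
    (hA1R : 0 < μ {ω | A ω = 1 ∧ R ω = 1})
    (μ₀ : (Fin p → ℝ) → (Fin q → ℝ) → ℝ) (hμ₀ : Measurable (Function.uncurry μ₀))
    (hμ₀2 : MemLp (fun ω => μ₀ (Lstar ω) (L ω)) 2 μ)
    (ε₁f ξ : (Fin p → ℝ) → ℝ → ℝ)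
    (hε₁f : Measurable (Function.uncurry ε₁f)) (hξ : Measurable (Function.uncurry ξ))
    (hε₁ver : (fun ω => ε₁f (Lstar ω) (Y ω)) =ᵐ[μ[|{ω | A ω = 1 ∧ R ω = 1}]]
      (μ[|{ω | A ω = 1 ∧ R ω = 1}])[(fun ω => g (L ω) (A ω))|MeasurableSpace.comap
          (fun ω => (Lstar ω, Y ω)) inferInstance])
    (hξver : (fun ω => ξ (Lstar ω) (Y ω)) =ᵐ[μ[|{ω | A ω = 1 ∧ R ω = 1}]]
      (μ[|{ω | A ω = 1 ∧ R ω = 1}])[(fun ω => g (L ω) (A ω) * μ₀ (Lstar ω) (L ω))|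
        MeasurableSpace.comap (fun ω => (Lstar ω, Y ω)) inferInstance]) :
    (∫ ω, A ω * R ω * g (L ω) (A ω) / η (Lstar ω) 1 ∂μ
        = ∫ ω, A ω * ε₁f (Lstar ω) (Y ω) ∂μ) ∧
    (∫ ω, (A ω * R ω * g (L ω) (A ω) / η (Lstar ω) 1) * (Y ω - μ₀ (Lstar ω) (L ω)) ∂μ
        = ∫ ω, A ω * (ε₁f (Lstar ω) (Y ω) * Y ω - ξ (Lstar ω) (Y ω)) ∂μ) :=
  stmt_6_general (𝓕 := 𝓕) μ Lstar L A R Y hLstar hL hA hR hY hA01 hR01 hY2 g hg hg01 hMAR η hη hηver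
    ε₀ hε₀ hηpos μ₀ hμ₀2 ε₁f ξ hε₁f hξ hε₁ver hξver
end

section
/- Under the setup and Assumptions A4 and A5, let μ₀ : ℝ^p × ℝ^q → ℝ be any measurable function with μ₀(L*, L) square-integrable under μ, and let ω₁ : ℝ^p → ℝ and ν : ℝ^p → ℝ be measurable functions such that, under μ(·|{A = 1, R = 1}), ω₁(L*) is a version of E[E | σ(L*)] and ν(L*) is a version of E[E·(Y − μ₀(L*, L)) | σ(L*)]. Then E[A·R·E/η₁(L*)] = E[A·ω₁(L*)] and E[(A·R·E/η₁(L*))·(Y − μ₀(L*, L))] = E[A·ν(L*)]. -/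
/-!
On `S = {A = 1, R = 1}` the weight `A·R/η₁(L*)` is `1/η₁(L*)`, so the left-hand sides are
`μ(S)` times integrals under `μ(·|S)`. There `1/η₁(L*)` is `σ(L*)`-measurable and the tower
property replaces `E` (resp. `E·(Y − μ₀)`) by `ω₁(L*)` (resp. `ν(L*)`). Back under `μ`, the
integrand `A·R·ω₁(L*)/η₁(L*)` carries a `σ(L*, A)`-measurable factor in front of `R`, so `R` may
be replaced by `η(L*, A)`, which is `η₁(L*)` on `{A = 1}` and cancels.
-/

open MeasureTheory ProbabilityTheory
open scoped ENNReal ProbabilityTheory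

namespace MeasureTheory

theorem integral_mul_eq_of_ae_eq_condExp {Ω : Type*} {m m₀ : MeasurableSpace Ω} {μ : Measure Ω}
    (hm : m ≤ m₀) [SigmaFinite (μ.trim hm)] {w f v : Ω → ℝ} (hw : AEStronglyMeasurable[m] w μ)
    (hwf : Integrable (fun x => w x * f x) μ) (hf : Integrable f μ) (hv : v =ᵐ[μ] μ[f|m]) :
    ∫ x, w x * f x ∂μ = ∫ x, w x * v x ∂μ :=
  calc ∫ x, w x * f x ∂μ = ∫ x, (μ[w * f|m]) x ∂μ := (integral_condExp hm).symm
    _ = ∫ x, w x * v x ∂μ := integral_congr_ae <| by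
        filter_upwards [condExp_mul_of_aestronglyMeasurable_left hw hwf hf, hv] with x h1 h2
        rw [h1, Pi.mul_apply, h2]

end MeasureTheory

namespace ProbabilityTheory

variable {Ω : Type*} {mΩ : MeasurableSpace Ω} {μ : Measure Ω} {s : Set Ω}

instance isFiniteMeasure_cond : IsFiniteMeasure μ[|s] := by
  by_cases h : μ s = 0 ∨ μ s = ∞
  · rw [cond_eq_zero.mpr h.symm]
    infer_instance
  · rw [not_or] at h
    have := cond_isProbabilityMeasure_of_finite h.1 h.2
    infer_instance

theorem integral_indicator_eq_measureReal_smul_integral_cond {E : Type*} [NormedAddCommGroup E]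
    [NormedSpace ℝ E] (hs : MeasurableSet s) (hμs : μ s ≠ ∞) (f : Ω → E) :
    ∫ x, s.indicator f x ∂μ = μ.real s • ∫ x, f x ∂μ[|s] := by
  rw [integral_indicator hs, cond, integral_smul_measure, smul_smul]
  rcases eq_or_ne (μ s) 0 with h0 | h0
  · simp [Measure.restrict_eq_zero.mpr h0]
  · rw [ENNReal.toReal_inv, ← measureReal_def,
      mul_inv_cancel₀ ((measureReal_ne_zero_iff hμs).mpr h0), one_smul]

theorem integrableOn_of_integrable_cond {E : Type*} [NormedAddCommGroup E] {f : Ω → E}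
    (hμs : μ s ≠ ∞) (hf : Integrable f μ[|s]) : IntegrableOn f s μ := by
  rcases eq_or_ne (μ s) 0 with h0 | h0
  · simp [IntegrableOn, Measure.restrict_eq_zero.mpr h0]
  · exact (integrable_smul_measure (ENNReal.inv_ne_zero.mpr hμs) (ENNReal.inv_ne_top.mpr h0)).mp hf

theorem _root_.MeasureTheory.Integrable.cond_s7 {E : Type*} [NormedAddCommGroup E] {f : Ω → E}
    (hf : Integrable f μ) : Integrable f μ[|s] := by
  rcases eq_or_ne (μ s) 0 with h0 | h0
  · simp [cond_eq_zero_of_meas_eq_zero h0]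
  · exact hf.restrict.smul_measure (ENNReal.inv_ne_top.mpr h0)

theorem integral_indicator_mul_eq_of_ae_eq_condExp_cond (hs : MeasurableSet s) (hμs : μ s ≠ ∞)
    {m : MeasurableSpace Ω} (hm : m ≤ mΩ) {w G v : Ω → ℝ} {C : ℝ}
    (hw : AEStronglyMeasurable[m] w μ[|s]) (hw_bound : ∀ᵐ x ∂μ[|s], ‖w x‖ ≤ C)
    (hG : Integrable G μ[|s]) (hv : v =ᵐ[μ[|s]] μ[|s][G|m]) :
    ∫ x, s.indicator (fun x => w x * G x) x ∂μ = ∫ x, s.indicator (fun x => w x * v x) x ∂μ := by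
  rw [integral_indicator_eq_measureReal_smul_integral_cond hs hμs,
    integral_indicator_eq_measureReal_smul_integral_cond hs hμs,
    integral_mul_eq_of_ae_eq_condExp hm hw
      (hG.bdd_mul (hw.mono hm) hw_bound) hG hv]

theorem indicator_setOf_eq_one_and_eq_one {A R : Ω → ℝ} (hA01 : ∀ ω, A ω = 0 ∨ A ω = 1)
    (hR01 : ∀ ω, R ω = 0 ∨ R ω = 1) (f : Ω → ℝ) :
    {ω | A ω = 1 ∧ R ω = 1}.indicator f = fun ω => A ω * R ω * f ω := by
  funext ω
  rcases hA01 ω with hA | hA <;> rcases hR01 ω with hR | hR <;> simp [hA, hR]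

variable {X : Type*} [MeasurableSpace X] [IsFiniteMeasure μ] {Lstar : Ω → X} {A R : Ω → ℝ}
  {η : X → ℝ → ℝ}

theorem integral_ipw_eq (hLstar : Measurable Lstar) (hA : Measurable A) (hR : Measurable R)
    (hA01 : ∀ ω, A ω = 0 ∨ A ω = 1) (hR01 : ∀ ω, R ω = 0 ∨ R ω = 1)
    (hη : Measurable fun x => η x 1)
    (hηR : (fun ω => η (Lstar ω) (A ω)) =ᵐ[μ]
      μ[R|MeasurableSpace.comap (fun ω => (Lstar ω, A ω)) inferInstance])
    {ε₀ : ℝ} (hε₀ : 0 < ε₀) (hη₁ : ∀ᵐ ω ∂μ, ε₀ ≤ η (Lstar ω) 1)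
    {G : Ω → ℝ} (hG : Integrable G μ[|{ω | A ω = 1 ∧ R ω = 1}]) {v : X → ℝ} (hv : Measurable v)
    (hvG : (fun ω => v (Lstar ω)) =ᵐ[μ[|{ω | A ω = 1 ∧ R ω = 1}]]
      (μ[|{ω | A ω = 1 ∧ R ω = 1}])[G|MeasurableSpace.comap Lstar inferInstance]) :
    ∫ ω, A ω * R ω * G ω / η (Lstar ω) 1 ∂μ = ∫ ω, A ω * v (Lstar ω) ∂μ := by
  set S := {ω | A ω = 1 ∧ R ω = 1}
  have hS : MeasurableSet S :=
    (hA (measurableSet_singleton 1)).inter (hR (measurableSet_singleton 1))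
  have hw_bound : ∀ᵐ ω ∂μ, ‖(η (Lstar ω) 1)⁻¹‖ ≤ ε₀⁻¹ := hη₁.mono fun ω h => by
    rw [norm_inv, Real.norm_of_nonneg (hε₀.le.trans h)]
    exact inv_anti₀ hε₀ h
  have hR_int : Integrable R μ := by
    refine (integrable_const (1 : ℝ)).mono' hR.aestronglyMeasurable (.of_forall fun ω => ?_)
    rcases hR01 ω with h | h <;> simp [h]
  have hAR (f : Ω → ℝ) : S.indicator f = fun ω => A ω * R ω * f ω :=
    indicator_setOf_eq_one_and_eq_one hA01 hR01 f
  calc ∫ ω, A ω * R ω * G ω / η (Lstar ω) 1 ∂μ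
      = ∫ ω, S.indicator (fun ω => (η (Lstar ω) 1)⁻¹ * G ω) ω ∂μ := by
        rw [hAR]; congr 1; funext ω; ring
    _ = ∫ ω, S.indicator (fun ω => (η (Lstar ω) 1)⁻¹ * v (Lstar ω)) ω ∂μ :=
        integral_indicator_mul_eq_of_ae_eq_condExp_cond hS (measure_ne_top _ _) hLstar.comap_le
          ((hη.comp (comap_measurable Lstar)).inv.aestronglyMeasurable)
          (cond_absolutelyContinuous.ae_le hw_bound) hG hvG
    _ = ∫ ω, A ω * v (Lstar ω) / η (Lstar ω) 1 * R ω ∂μ := by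
        rw [hAR]; congr 1; funext ω; ring
    _ = ∫ ω, A ω * v (Lstar ω) / η (Lstar ω) 1 * η (Lstar ω) (A ω) ∂μ := by
        refine integral_mul_eq_of_ae_eq_condExp (hLstar.prodMk hA).comap_le ?_ ?_ hR_int hηR
        · exact (((measurable_snd.mul (hv.comp measurable_fst)).div
            (hη.comp measurable_fst)).comp (comap_measurable _)).aestronglyMeasurable
        · have hwv : Integrable (fun ω => (η (Lstar ω) 1)⁻¹ * v (Lstar ω)) μ[|S] :=
            (integrable_condExp.congr hvG.symm).bdd_mul (hη.comp hLstar).inv.aestronglyMeasurable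
              (cond_absolutelyContinuous.ae_le hw_bound)
          have := (integrableOn_of_integrable_cond (measure_ne_top _ _) hwv).integrable_indicator hS
          rw [hAR] at this
          exact this.congr (.of_forall fun ω => by ring)
    _ = ∫ ω, A ω * v (Lstar ω) ∂μ := integral_congr_ae <| hη₁.mono fun ω h => by
        rcases hA01 ω with hA0 | hA1
        · simp [hA0]
        · dsimp only
          rw [hA1, div_mul_cancel₀ _ (hε₀.trans_le h).ne']

end ProbabilityTheory

theorem stmt_7_general
    {Ω : Type*} [𝓕 : MeasurableSpace Ω]
    (μ : Measure Ω) [IsProbabilityMeasure μ]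
    {p q : ℕ}
    (Lstar : Ω → Fin p → ℝ) (L : Ω → Fin q → ℝ) (A R Y : Ω → ℝ)
    (hLstar : Measurable Lstar) (hL : Measurable L)
    (hA : Measurable A) (hR : Measurable R)
    (hA01 : ∀ ω, A ω = 0 ∨ A ω = 1) (hR01 : ∀ ω, R ω = 0 ∨ R ω = 1)
    (hY2 : MemLp Y 2 μ)
    (g : (Fin q → ℝ) → ℝ → ℝ) (hg : Measurable (Function.uncurry g))
    (hg01 : ∀ x a, g x a = 0 ∨ g x a = 1)
    -- Assumption A5 (missingness positivity)
    (η : (Fin p → ℝ) → ℝ → ℝ) (hη : Measurable (Function.uncurry η))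
    (hηver : (fun ω => η (Lstar ω) (A ω)) =ᵐ[μ]
      μ[R|MeasurableSpace.comap (fun ω => (Lstar ω, A ω)) inferInstance])
    (ε₀ : ℝ) (hε₀ : 0 < ε₀)
    (hηpos : ∀ᵐ ω ∂μ, ε₀ ≤ η (Lstar ω) 0 ∧ ε₀ ≤ η (Lstar ω) 1)
    (μ₀ : (Fin p → ℝ) → (Fin q → ℝ) → ℝ)
    (hμ₀2 : MemLp (fun ω => μ₀ (Lstar ω) (L ω)) 2 μ)
    (ω₁ ν : (Fin p → ℝ) → ℝ)
    (hω₁ : Measurable ω₁) (hν : Measurable ν)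
    (hω₁ver : (fun ω => ω₁ (Lstar ω)) =ᵐ[μ[|{ω | A ω = 1 ∧ R ω = 1}]]
      (μ[|{ω | A ω = 1 ∧ R ω = 1}])[(fun ω => g (L ω) (A ω))|MeasurableSpace.comap
          Lstar inferInstance])
    (hνver : (fun ω => ν (Lstar ω)) =ᵐ[μ[|{ω | A ω = 1 ∧ R ω = 1}]]
      (μ[|{ω | A ω = 1 ∧ R ω = 1}])[(fun ω => g (L ω) (A ω) * (Y ω - μ₀ (Lstar ω) (L ω)))|
        MeasurableSpace.comap Lstar inferInstance]) :
    (∫ ω, A ω * R ω * g (L ω) (A ω) / η (Lstar ω) 1 ∂μ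
        = ∫ ω, A ω * ω₁ (Lstar ω) ∂μ) ∧
    (∫ ω, (A ω * R ω * g (L ω) (A ω) / η (Lstar ω) 1) * (Y ω - μ₀ (Lstar ω) (L ω)) ∂μ
        = ∫ ω, A ω * ν (Lstar ω) ∂μ) := by
  have hη₁ : Measurable fun x => η x 1 := hη.comp (measurable_id.prodMk measurable_const)
  have hε₀η₁ : ∀ᵐ ω ∂μ, ε₀ ≤ η (Lstar ω) 1 := hηpos.mono fun _ h => h.2
  have hgm : AEStronglyMeasurable (fun ω => g (L ω) (A ω)) (μ[|{ω | A ω = 1 ∧ R ω = 1}]) :=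
    (hg.comp (hL.prodMk hA)).aestronglyMeasurable
  have hg_bound : ∀ᵐ ω ∂μ[|{ω | A ω = 1 ∧ R ω = 1}], ‖g (L ω) (A ω)‖ ≤ 1 :=
    .of_forall fun ω => by rcases hg01 (L ω) (A ω) with h | h <;> simp [h]
  have hD : Integrable (fun ω => Y ω - μ₀ (Lstar ω) (L ω)) μ :=
    (hY2.sub hμ₀2).integrable one_le_two
  refine ⟨integral_ipw_eq hLstar hA hR hA01 hR01 hη₁ hηver hε₀ hε₀η₁
    ((integrable_const 1).mono' hgm hg_bound) hω₁ hω₁ver, ?_⟩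
  rw [← integral_ipw_eq hLstar hA hR hA01 hR01 hη₁ hηver hε₀ hε₀η₁
    (hD.cond_s7.bdd_mul hgm hg_bound) hν hνver]
  congr 1
  funext ω
  ring

/-- Reparametrization of α(P) and β(P) through the nested nuisance functions
ω₁ and ν conditioned on L* among treated complete cases. -/
theorem stmt_7
    {Ω : Type*} [𝓕 : MeasurableSpace Ω] [StandardBorelSpace Ω] [Nonempty Ω]
    (μ : Measure Ω) [IsProbabilityMeasure μ]
    {p q : ℕ}
    (Lstar : Ω → Fin p → ℝ) (L : Ω → Fin q → ℝ) (A R Y : Ω → ℝ)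
    (hLstar : Measurable Lstar) (hL : Measurable L)
    (hA : Measurable A) (hR : Measurable R) (hY : Measurable Y)
    (hA01 : ∀ ω, A ω = 0 ∨ A ω = 1) (hR01 : ∀ ω, R ω = 0 ∨ R ω = 1)
    (hY2 : MemLp Y 2 μ)
    (g : (Fin q → ℝ) → ℝ → ℝ) (hg : Measurable (Function.uncurry g))
    (hg01 : ∀ x a, g x a = 0 ∨ g x a = 1)
    -- Assumption A4 (MAR): R ⫫ (L, Y) | σ(L*, A)
    (hMAR : CondIndepFun (MeasurableSpace.comap (fun ω => (Lstar ω, A ω)) inferInstance)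
      ((hLstar.prodMk hA).comap_le) R (fun ω => (L ω, Y ω)) μ)
    -- Assumption A5 (missingness positivity)
    (η : (Fin p → ℝ) → ℝ → ℝ) (hη : Measurable (Function.uncurry η))
    (hηver : (fun ω => η (Lstar ω) (A ω)) =ᵐ[μ]
      μ[R|MeasurableSpace.comap (fun ω => (Lstar ω, A ω)) inferInstance])
    (ε₀ : ℝ) (hε₀ : 0 < ε₀)
    (hηpos : ∀ᵐ ω ∂μ, ε₀ ≤ η (Lstar ω) 0 ∧ ε₀ ≤ η (Lstar ω) 1)
    (hA1R : 0 < μ {ω | A ω = 1 ∧ R ω = 1})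
    (μ₀ : (Fin p → ℝ) → (Fin q → ℝ) → ℝ) (hμ₀ : Measurable (Function.uncurry μ₀))
    (hμ₀2 : MemLp (fun ω => μ₀ (Lstar ω) (L ω)) 2 μ)
    (ω₁ ν : (Fin p → ℝ) → ℝ)
    (hω₁ : Measurable ω₁) (hν : Measurable ν)
    (hω₁ver : (fun ω => ω₁ (Lstar ω)) =ᵐ[μ[|{ω | A ω = 1 ∧ R ω = 1}]]
      (μ[|{ω | A ω = 1 ∧ R ω = 1}])[(fun ω => g (L ω) (A ω))|MeasurableSpace.comap
          Lstar inferInstance])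
    (hνver : (fun ω => ν (Lstar ω)) =ᵐ[μ[|{ω | A ω = 1 ∧ R ω = 1}]]
      (μ[|{ω | A ω = 1 ∧ R ω = 1}])[(fun ω => g (L ω) (A ω) * (Y ω - μ₀ (Lstar ω) (L ω)))|
        MeasurableSpace.comap Lstar inferInstance]) :
    (∫ ω, A ω * R ω * g (L ω) (A ω) / η (Lstar ω) 1 ∂μ
        = ∫ ω, A ω * ω₁ (Lstar ω) ∂μ) ∧
    (∫ ω, (A ω * R ω * g (L ω) (A ω) / η (Lstar ω) 1) * (Y ω - μ₀ (Lstar ω) (L ω)) ∂μ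
        = ∫ ω, A ω * ν (Lstar ω) ∂μ) :=
  stmt_7_general (𝓕 := 𝓕) μ Lstar L A R Y hLstar hL hA hR hA01 hR01 hY2 g hg hg01 η hη hηver ε₀ hε₀
    hηpos μ₀ hμ₀2 ω₁ ν hω₁ hν hω₁ver hνver
end

section
/- (Lemma 1, α-remainder / von Mises expansion for α(P).) Under the setup and Assumptions A4 and A5, let ε₁ : ℝ^p × ℝ → ℝ be measurable with ε₁(L*, Y) a version of E[E | σ(L*, Y)] under μ(·|{A = 1, R = 1}). Let η̄₁ : ℝ^p → ℝ and ε̄₁ : ℝ^p × ℝ → ℝ be any bounded measurable functions with η̄₁ ≥ ε' > 0 everywhere. Then E[A·(1 − R/η̄₁(L*))·ε̄₁(L*, Y)] + E[A·R·E/η̄₁(L*)] − E[A·ε₁(L*, Y)] = E[A·(ε̄₁(L*, Y) − ε₁(L*, Y))·(1 − η₁(L*)/η̄₁(L*))]. -/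
/-!
Missing at random makes the complete-case indicator `R` and the propensity `η(L*, A)`
interchangeable as weights in front of any function of `(L*, A, L, Y)`: by conditional
independence the two weighted laws of `(L*, A, L, Y)` agree on rectangles, hence everywhere.
Expanding both sides, the identity therefore reduces to
`𝔼[A R ε̄₁/η̄₁] = 𝔼[A η₁ ε̄₁/η̄₁]`, which is this interchange, and
`𝔼[A R E/η̄₁] = 𝔼[A η₁ ε₁/η̄₁]`, which first replaces `E` by its complete-case regression
`ε₁(L*, Y)` (`1/η̄₁(L*)` is a function of `(L*, Y)`) and then interchanges. Positivity of `η`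
carries null sets among complete cases over to all units, so that `ε₁`, which is pinned down
only on complete cases, takes values in `[0, 1]` on all treated units and every integral is
finite.
-/

open MeasureTheory ProbabilityTheory
open scoped ENNReal ProbabilityTheory

theorem abs_le_one_of_mem_Icc {x : ℝ} (hx : x ∈ Set.Icc 0 1) : |x| ≤ 1 :=
  (abs_of_nonneg hx.1).trans_le hx.2

section ConditionalExpectation

variable {Ω : Type*} {m mΩ : MeasurableSpace Ω} {μ : Measure Ω}

theorem ae_mem_Icc_of_ae_eq_condExp {f g : Ω → ℝ}
    (hg : ∀ ω, g ω ∈ Set.Icc 0 1) (hf : f =ᵐ[μ] μ[g | m]) : ∀ᵐ ω ∂μ, f ω ∈ Set.Icc 0 1 := by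
  filter_upwards [hf, condExp_nonneg (m := m) (.of_forall fun ω => (hg ω).1),
    ae_bdd_abs_condExp_of_ae_bdd_abs (m := m) (.of_forall fun ω => abs_le_one_of_mem_Icc (hg ω))]
    with ω hfω hnn hle
  rw [hfω]
  exact ⟨hnn, (abs_le.mp hle).2⟩

theorem setIntegral_mul_condExp_of_bound [IsFiniteMeasure μ] (hm : m ≤ mΩ) {φ ψ : Ω → ℝ}
    (hφ : StronglyMeasurable[m] φ) (c : ℝ) (hφc : ∀ᵐ ω ∂μ, ‖φ ω‖ ≤ c) (hψ : Integrable ψ μ)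
    {s : Set Ω} (hs : MeasurableSet[m] s) :
    ∫ ω in s, φ ω * (μ[ψ | m]) ω ∂μ = ∫ ω in s, φ ω * ψ ω ∂μ := by
  rw [← setIntegral_condExp hm (hψ.bdd_mul (hφ.mono hm).aestronglyMeasurable hφc) hs]
  exact setIntegral_congr_ae (hm s hs)
    ((condExp_stronglyMeasurable_mul_of_bound hm hφ hψ c hφc).mono fun ω h _ => h.symm)

theorem setIntegral_eq_measureReal_smul_integral_cond {E : Type*} [NormedAddCommGroup E]
    [NormedSpace ℝ E] [IsFiniteMeasure μ] (s : Set Ω) (f : Ω → E) :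
    ∫ ω in s, f ω ∂μ = μ.real s • ∫ ω, f ω ∂μ[|s] := by
  rcases eq_or_ne (μ s) 0 with hs | hs
  · simp [Measure.restrict_eq_zero.mpr hs, measureReal_def, hs]
  · rw [ProbabilityTheory.cond, integral_smul_measure, smul_smul, ENNReal.toReal_inv,
      measureReal_def, mul_inv_cancel₀ (ENNReal.toReal_ne_zero.mpr ⟨hs, measure_ne_top μ s⟩),
      one_smul]

theorem setIntegral_mul_eq_of_ae_eq_condExp_cond [IsFiniteMeasure μ] (hm : m ≤ mΩ) {s : Set Ω}
    {φ ψ f : Ω → ℝ} (hφ : StronglyMeasurable[m] φ) (c : ℝ) (hφc : ∀ᵐ ω ∂μ[|s], ‖φ ω‖ ≤ c)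
    (hψ : Integrable ψ μ[|s]) (hf : f =ᵐ[μ[|s]] μ[|s][ψ | m]) :
    ∫ ω in s, φ ω * ψ ω ∂μ = ∫ ω in s, φ ω * f ω ∂μ := by
  have h := setIntegral_mul_condExp_of_bound hm hφ c hφc hψ MeasurableSet.univ
  rw [setIntegral_univ, setIntegral_univ] at h
  rw [setIntegral_eq_measureReal_smul_integral_cond, setIntegral_eq_measureReal_smul_integral_cond,
    ← h]
  congr 1
  exact integral_congr_ae (hf.mono fun ω h => by simp only [h])

theorem ae_imp_of_ae_cond [IsFiniteMeasure μ] {s : Set Ω} (hs : MeasurableSet s) {p : Ω → Prop}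
    (h : ∀ᵐ ω ∂μ[|s], p ω) : ∀ᵐ ω ∂μ, ω ∈ s → p ω :=
  (ae_restrict_iff' hs).mp
    ((Measure.ae_ennreal_smul_measure_iff (ENNReal.inv_ne_zero.mpr (measure_ne_top μ s))).mp h)

end ConditionalExpectation

section Density

variable {Ω γ : Type*} {mΩ : MeasurableSpace Ω} {mγ : MeasurableSpace γ} {μ : Measure Ω}
  {W : Ω → γ}

theorem integral_map_withDensity_ofReal (hW : Measurable W) {ρ : Ω → ℝ} (hρ : Measurable ρ)
    (hρ_nn : 0 ≤ᵐ[μ] ρ) {G : γ → ℝ} (hG : Measurable G) :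
    ∫ z, G z ∂(μ.withDensity fun ω => ENNReal.ofReal (ρ ω)).map W = ∫ ω, ρ ω * G (W ω) ∂μ := by
  rw [integral_map hW.aemeasurable hG.aestronglyMeasurable,
    integral_withDensity_eq_integral_toReal_smul (by fun_prop)
      (.of_forall fun _ => ENNReal.ofReal_lt_top)]
  refine integral_congr_ae ?_
  filter_upwards [hρ_nn] with ω h
  simp [ENNReal.toReal_ofReal h]

theorem ae_comp_of_map_withDensity_ofReal_eq (hW : Measurable W) {ρ₁ ρ₂ : Ω → ℝ}
    (hρ₁ : Measurable ρ₁) (hρ₂ : Measurable ρ₂)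
    (hmap : (μ.withDensity fun ω => ENNReal.ofReal (ρ₁ ω)).map W
      = (μ.withDensity fun ω => ENNReal.ofReal (ρ₂ ω)).map W)
    (hρ₂_pos : ∀ᵐ ω ∂μ, 0 < ρ₂ ω) {P : γ → Prop} (hP : MeasurableSet {z | P z})
    (h : ∀ᵐ ω ∂μ, 0 < ρ₁ ω → P (W ω)) : ∀ᵐ ω ∂μ, P (W ω) := by
  have hN : MeasurableSet (W ⁻¹' {z | P z}ᶜ) := hW hP.compl
  have h₁ : ∫⁻ ω in W ⁻¹' {z | P z}ᶜ, ENNReal.ofReal (ρ₁ ω) ∂μ = 0 := by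
    refine (setLIntegral_eq_zero_iff hN (by fun_prop)).mpr ?_
    filter_upwards [h] with ω hω hωN
    exact ENNReal.ofReal_eq_zero.mpr (not_lt.mp fun hpos => hωN (hω hpos))
  have h₂ : ∀ᵐ ω ∂μ, ω ∈ W ⁻¹' {z | P z}ᶜ → ENNReal.ofReal (ρ₂ ω) = 0 := by
    rwa [← setLIntegral_eq_zero_iff hN (by fun_prop), ← withDensity_apply _ hN,
      ← Measure.map_apply hW hP.compl, ← hmap, Measure.map_apply hW hP.compl,
      withDensity_apply _ hN]
  filter_upwards [h₂, hρ₂_pos] with ω h₂ω hpos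
  by_contra hω
  exact (ENNReal.ofReal_eq_zero.mp (h₂ω hω)).not_gt hpos

end Density

section MissingAtRandom

variable {Ω α β : Type*} {mΩ : MeasurableSpace Ω} [StandardBorelSpace Ω]
  {mα : MeasurableSpace α} {mβ : MeasurableSpace β} {μ : Measure Ω} [IsFiniteMeasure μ]
  {U : Ω → α} {V : Ω → β} {R : Ω → ℝ} {η : α → ℝ}

theorem setIntegral_preimage_inter_eq_of_condIndepFun_s8
    (hU : Measurable U) (hV : Measurable V) (hR : Measurable R) (hR01 : ∀ ω, R ω = 0 ∨ R ω = 1)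
    (hMAR : CondIndepFun (mα.comap U) hU.comap_le R V μ) (hη : Measurable η)
    (hηver : (fun ω => η (U ω)) =ᵐ[μ] μ[R | mα.comap U]) {s : Set α} {t : Set β}
    (hs : MeasurableSet s) (ht : MeasurableSet t) :
    ∫ ω in U ⁻¹' s ∩ V ⁻¹' t, R ω ∂μ = ∫ ω in U ⁻¹' s ∩ V ⁻¹' t, η (U ω) ∂μ := by
  have hm : mα.comap U ≤ mΩ := hU.comap_le
  have hUs : MeasurableSet[mα.comap U] (U ⁻¹' s) := ⟨s, hs, rfl⟩
  have hB : MeasurableSet (R ⁻¹' {1} ∩ V ⁻¹' t) := (hR (measurableSet_singleton 1)).inter (hV ht)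
  have hR_eq : R = (R ⁻¹' {1}).indicator fun _ => 1 := by
    funext ω; rcases hR01 ω with h | h <;> simp [h]
  have hηU : StronglyMeasurable[mα.comap U] fun ω => η (U ω) :=
    (hη.comp (comap_measurable U)).stronglyMeasurable
  have hηU_le : ∀ᵐ ω ∂μ, ‖η (U ω)‖ ≤ 1 :=
    (ae_mem_Icc_of_ae_eq_condExp (fun ω => by rcases hR01 ω with h | h <;> simp [h]) hηver).mono
      fun ω h => abs_le_one_of_mem_Icc h
  have hprod := (condIndepFun_iff_condExp_inter_preimage_eq_mul hR hV).mp hMAR {1} t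
    (measurableSet_singleton 1) ht
  calc ∫ ω in U ⁻¹' s ∩ V ⁻¹' t, R ω ∂μ
      = ∫ ω in U ⁻¹' s, (R ⁻¹' {1} ∩ V ⁻¹' t).indicator (fun _ => (1 : ℝ)) ω ∂μ := by
        rw [← setIntegral_indicator (hV ht)]
        congr 1; funext ω
        by_cases h : ω ∈ V ⁻¹' t <;> rcases hR01 ω with hr | hr <;> simp [h, hr]
    _ = ∫ ω in U ⁻¹' s,
          (μ[(R ⁻¹' {1} ∩ V ⁻¹' t).indicator (fun _ => (1 : ℝ)) | mα.comap U]) ω ∂μ :=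
        (setIntegral_condExp hm ((integrable_const (1 : ℝ)).indicator hB) hUs).symm
    _ = ∫ ω in U ⁻¹' s,
          η (U ω) * (μ[(V ⁻¹' t).indicator (fun _ => (1 : ℝ)) | mα.comap U]) ω ∂μ := by
        refine setIntegral_congr_ae (hm _ hUs) ?_
        filter_upwards [hηver, hprod] with ω hηω hprodω _
        rw [hηω, hprodω, ← hR_eq]
    _ = ∫ ω in U ⁻¹' s, η (U ω) * (V ⁻¹' t).indicator (fun _ => (1 : ℝ)) ω ∂μ :=
        setIntegral_mul_condExp_of_bound hm hηU 1 hηU_le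
          ((integrable_const (1 : ℝ)).indicator (hV ht)) hUs
    _ = ∫ ω in U ⁻¹' s ∩ V ⁻¹' t, η (U ω) ∂μ := by
        rw [← setIntegral_indicator (hV ht)]
        congr 1; funext ω; by_cases h : ω ∈ V ⁻¹' t <;> simp [h]

theorem map_withDensity_eq_of_condIndepFun_s8
    (hU : Measurable U) (hV : Measurable V) (hR : Measurable R) (hR01 : ∀ ω, R ω = 0 ∨ R ω = 1)
    (hMAR : CondIndepFun (mα.comap U) hU.comap_le R V μ) (hη : Measurable η)
    (hηver : (fun ω => η (U ω)) =ᵐ[μ] μ[R | mα.comap U]) :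
    (μ.withDensity fun ω => ENNReal.ofReal (R ω)).map (fun ω => (U ω, V ω))
      = (μ.withDensity fun ω => ENNReal.ofReal (η (U ω))).map (fun ω => (U ω, V ω)) := by
  have hR_Icc : ∀ ω, R ω ∈ Set.Icc 0 1 := fun ω => by rcases hR01 ω with h | h <;> simp [h]
  have hηU_Icc := ae_mem_Icc_of_ae_eq_condExp hR_Icc hηver
  have hR_int : Integrable R μ :=
    .of_bound hR.aestronglyMeasurable 1 (.of_forall fun ω => abs_le_one_of_mem_Icc (hR_Icc ω))
  have hηU_int : Integrable (fun ω => η (U ω)) μ :=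
    .of_bound (hη.comp hU).aestronglyMeasurable 1 (hηU_Icc.mono fun ω => abs_le_one_of_mem_Icc)
  have := isFiniteMeasure_withDensity_ofReal hR_int.2
  refine Measure.ext_prod fun {s t} hs ht => ?_
  have hst := (hU hs).inter (hV ht)
  rw [Measure.map_apply (hU.prodMk hV) (hs.prod ht), Measure.map_apply (hU.prodMk hV) (hs.prod ht),
    Set.mk_preimage_prod, withDensity_apply _ hst, withDensity_apply _ hst,
    ← ofReal_integral_eq_lintegral_ofReal hR_int.integrableOn (.of_forall fun ω => (hR_Icc ω).1),
    ← ofReal_integral_eq_lintegral_ofReal hηU_int.integrableOn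
      (ae_restrict_of_ae (hηU_Icc.mono fun ω h => h.1)),
    setIntegral_preimage_inter_eq_of_condIndepFun_s8 hU hV hR hR01 hMAR hη hηver hs ht]

end MissingAtRandom

section Treatment

variable {Ω α β : Type*} {mΩ : MeasurableSpace Ω} {mα : MeasurableSpace α}
  {mβ : MeasurableSpace β} {μ : Measure Ω} {X : Ω → α} {A R : Ω → ℝ} {V : Ω → β}
  {η : α → ℝ → ℝ}

theorem integral_mul_mul_comp_eq_of_map_withDensity_eq (hX : Measurable X) (hA : Measurable A)
    (hV : Measurable V) (hR : Measurable R) (hη : Measurable (Function.uncurry η))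
    (hA01 : ∀ ω, A ω = 0 ∨ A ω = 1) (hR_nn : ∀ ω, 0 ≤ R ω)
    (hη_nn : ∀ᵐ ω ∂μ, 0 ≤ η (X ω) (A ω))
    (hmap : (μ.withDensity fun ω => ENNReal.ofReal (R ω)).map (fun ω => ((X ω, A ω), V ω))
      = (μ.withDensity fun ω => ENNReal.ofReal (η (X ω) (A ω))).map
          (fun ω => ((X ω, A ω), V ω)))
    (G : α × β → ℝ) (hG : Measurable G) :
    ∫ ω, A ω * (R ω * G (X ω, V ω)) ∂μ = ∫ ω, A ω * (η (X ω) 1 * G (X ω, V ω)) ∂μ := by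
  have hW : Measurable fun ω => ((X ω, A ω), V ω) := (hX.prodMk hA).prodMk hV
  have hAG : Measurable fun z : (α × ℝ) × β => z.1.2 * G (z.1.1, z.2) := by fun_prop
  have hηXA : Measurable fun ω => η (X ω) (A ω) := hη.comp (hX.prodMk hA)
  calc ∫ ω, A ω * (R ω * G (X ω, V ω)) ∂μ = ∫ ω, R ω * (A ω * G (X ω, V ω)) ∂μ := by
        congr 1; funext ω; ring
    _ = ∫ ω, η (X ω) (A ω) * (A ω * G (X ω, V ω)) ∂μ := by
        rw [← integral_map_withDensity_ofReal hW hR (.of_forall hR_nn) hAG, hmap,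
          integral_map_withDensity_ofReal hW hηXA hη_nn hAG]
    _ = ∫ ω, A ω * (η (X ω) 1 * G (X ω, V ω)) ∂μ := by
        congr 1; funext ω; rcases hA01 ω with h | h <;> simp [h]

theorem ae_imp_of_ae_cond_of_map_withDensity_eq [IsFiniteMeasure μ] (hX : Measurable X)
    (hA : Measurable A) (hV : Measurable V) (hR : Measurable R)
    (hη : Measurable (Function.uncurry η)) (hR01 : ∀ ω, R ω = 0 ∨ R ω = 1)
    (hη_pos : ∀ᵐ ω ∂μ, 0 < η (X ω) (A ω))
    (hmap : (μ.withDensity fun ω => ENNReal.ofReal (R ω)).map (fun ω => ((X ω, A ω), V ω))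
      = (μ.withDensity fun ω => ENNReal.ofReal (η (X ω) (A ω))).map
          (fun ω => ((X ω, A ω), V ω)))
    {P : α × β → Prop} (hP : MeasurableSet {z | P z})
    (h : ∀ᵐ ω ∂μ[|{ω | A ω = 1 ∧ R ω = 1}], P (X ω, V ω)) :
    ∀ᵐ ω ∂μ, A ω = 1 → P (X ω, V ω) := by
  have hS : MeasurableSet {ω | A ω = 1 ∧ R ω = 1} :=
    (measurableSet_eq_fun hA measurable_const).inter (measurableSet_eq_fun hR measurable_const)
  refine ae_comp_of_map_withDensity_ofReal_eq (P := fun z => z.1.2 = 1 → P (z.1.1, z.2))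
    ((hX.prodMk hA).prodMk hV) hR (hη.comp (hX.prodMk hA)) hmap hη_pos (by measurability) ?_
  filter_upwards [ae_imp_of_ae_cond hS h] with ω hω hR_pos hA1
  exact hω ⟨hA1, (hR01 ω).resolve_left hR_pos.ne'⟩

end Treatment

section Remainder

variable {Ω : Type*} {mΩ : MeasurableSpace Ω} {μ : Measure Ω}

theorem integral_mul_mul_eq_setIntegral {a r x : Ω → ℝ} (ha : Measurable a) (hr : Measurable r)
    (ha01 : ∀ ω, a ω = 0 ∨ a ω = 1) (hr01 : ∀ ω, r ω = 0 ∨ r ω = 1) :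
    ∫ ω, a ω * (r ω * x ω) ∂μ = ∫ ω in {ω | a ω = 1 ∧ r ω = 1}, x ω ∂μ := by
  have hS : MeasurableSet {ω | a ω = 1 ∧ r ω = 1} :=
    (measurableSet_eq_fun ha measurable_const).inter (measurableSet_eq_fun hr measurable_const)
  rw [← integral_indicator hS]
  congr 1; funext ω
  rcases ha01 ω with ha | ha <;> rcases hr01 ω with hr | hr <;> simp [ha, hr]

theorem integrable_mul_of_ae_abs_le [IsFiniteMeasure μ] {a F : Ω → ℝ}
    (ha01 : ∀ ω, a ω = 0 ∨ a ω = 1) (hmeas : AEStronglyMeasurable (fun ω => a ω * F ω) μ)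
    {c : ℝ} (hF : ∀ᵐ ω ∂μ, a ω = 1 → |F ω| ≤ c) : Integrable (fun ω => a ω * F ω) μ := by
  refine .of_bound hmeas |c| (hF.mono fun ω h => ?_)
  rcases ha01 ω with ha | ha
  · simp [ha]
  · simpa [ha] using (h ha).trans (le_abs_self c)

theorem abs_mul_inv_mul_le {x y z c ε : ℝ} (hx : |x| ≤ 1) (hy : |y| ≤ c) (hε : 0 < ε)
    (hz : ε ≤ z) : |x * (z⁻¹ * y)| ≤ ε⁻¹ * c := by
  have hz₀ : 0 < z := hε.trans_le hz
  rw [abs_mul, abs_mul, abs_inv, abs_of_pos hz₀]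
  calc |x| * (z⁻¹ * |y|) ≤ 1 * (ε⁻¹ * c) := by bound
    _ = ε⁻¹ * c := one_mul _

theorem integral_remainder_eq {a r k e f G h : Ω → ℝ} [IsFiniteMeasure μ] {C ε : ℝ}
    (ha : Measurable a) (hr : Measurable r) (hk : Measurable k) (he : Measurable e)
    (hf : Measurable f) (hh : Measurable h) (ha01 : ∀ ω, a ω = 0 ∨ a ω = 1)
    (hr_Icc : ∀ ω, r ω ∈ Set.Icc 0 1) (he_le : ∀ ω, |e ω| ≤ C) (hε : 0 < ε)
    (hh_ge : ∀ ω, ε ≤ h ω) (hk_Icc : ∀ᵐ ω ∂μ, a ω = 1 → k ω ∈ Set.Icc 0 1)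
    (hf_Icc : ∀ᵐ ω ∂μ, a ω = 1 → f ω ∈ Set.Icc 0 1)
    (hre : ∫ ω, a ω * (r ω * ((h ω)⁻¹ * e ω)) ∂μ = ∫ ω, a ω * (k ω * ((h ω)⁻¹ * e ω)) ∂μ)
    (hrG : ∫ ω, a ω * (r ω * ((h ω)⁻¹ * G ω)) ∂μ = ∫ ω, a ω * (k ω * ((h ω)⁻¹ * f ω)) ∂μ) :
    ∫ ω, a ω * (1 - r ω / h ω) * e ω ∂μ + ∫ ω, a ω * r ω * G ω / h ω ∂μ - ∫ ω, a ω * f ω ∂μ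
      = ∫ ω, a ω * (e ω - f ω) * (1 - k ω / h ω) ∂μ := by
  have hae : Integrable (fun ω => a ω * e ω) μ :=
    integrable_mul_of_ae_abs_le ha01 (by fun_prop) (.of_forall fun ω _ => he_le ω)
  have hare : Integrable (fun ω => a ω * (r ω * ((h ω)⁻¹ * e ω))) μ :=
    integrable_mul_of_ae_abs_le ha01 (by fun_prop) (.of_forall fun ω _ =>
      abs_mul_inv_mul_le (abs_le_one_of_mem_Icc (hr_Icc ω)) (he_le ω) hε (hh_ge ω))
  have hake : Integrable (fun ω => a ω * (k ω * ((h ω)⁻¹ * e ω))) μ :=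
    integrable_mul_of_ae_abs_le ha01 (by fun_prop) (hk_Icc.mono fun ω hkω haω =>
      abs_mul_inv_mul_le (abs_le_one_of_mem_Icc (hkω haω)) (he_le ω) hε (hh_ge ω))
  have haf : Integrable (fun ω => a ω * f ω) μ :=
    integrable_mul_of_ae_abs_le ha01 (by fun_prop)
      (hf_Icc.mono fun ω hfω haω => abs_le_one_of_mem_Icc (hfω haω))
  have hakf : Integrable (fun ω => a ω * (k ω * ((h ω)⁻¹ * f ω))) μ :=
    integrable_mul_of_ae_abs_le ha01 (by fun_prop) (by
      filter_upwards [hk_Icc, hf_Icc] with ω hkω hfω haω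
      exact abs_mul_inv_mul_le (abs_le_one_of_mem_Icc (hkω haω))
        (abs_le_one_of_mem_Icc (hfω haω)) hε (hh_ge ω))
  have hlhs : ∫ ω, a ω * (1 - r ω / h ω) * e ω ∂μ
      = ∫ ω, a ω * e ω ∂μ - ∫ ω, a ω * (r ω * ((h ω)⁻¹ * e ω)) ∂μ := by
    rw [← integral_sub hae hare]; congr 1; funext ω; ring
  have hrGh : ∫ ω, a ω * r ω * G ω / h ω ∂μ = ∫ ω, a ω * (r ω * ((h ω)⁻¹ * G ω)) ∂μ := by
    congr 1; funext ω; ring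
  have hrhs : ∫ ω, a ω * (e ω - f ω) * (1 - k ω / h ω) ∂μ
      = (∫ ω, a ω * e ω ∂μ - ∫ ω, a ω * (k ω * ((h ω)⁻¹ * e ω)) ∂μ)
        - (∫ ω, a ω * f ω ∂μ - ∫ ω, a ω * (k ω * ((h ω)⁻¹ * f ω)) ∂μ) := by
    have hdiff_e : Integrable (fun ω => a ω * e ω - a ω * (k ω * ((h ω)⁻¹ * e ω))) μ :=
      hae.sub hake
    have hdiff_f : Integrable (fun ω => a ω * f ω - a ω * (k ω * ((h ω)⁻¹ * f ω))) μ :=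
      haf.sub hakf
    rw [← integral_sub hae hake, ← integral_sub haf hakf, ← integral_sub hdiff_e hdiff_f]
    congr 1; funext ω; ring
  rw [hlhs, hrGh, hrhs, hre, hrG]
  ring

end Remainder

theorem stmt_8_general
    {Ω : Type*} [𝓕 : MeasurableSpace Ω] [StandardBorelSpace Ω]
    (μ : Measure Ω) [IsProbabilityMeasure μ]
    {p q : ℕ}
    (Lstar : Ω → Fin p → ℝ) (L : Ω → Fin q → ℝ) (A R Y : Ω → ℝ)
    (hLstar : Measurable Lstar) (hL : Measurable L)
    (hA : Measurable A) (hR : Measurable R) (hY : Measurable Y)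
    (hA01 : ∀ ω, A ω = 0 ∨ A ω = 1) (hR01 : ∀ ω, R ω = 0 ∨ R ω = 1)
    (g : (Fin q → ℝ) → ℝ → ℝ) (hg : Measurable (Function.uncurry g))
    (hg01 : ∀ x a, g x a = 0 ∨ g x a = 1)
    -- Assumption A4 (MAR): R ⫫ (L, Y) | σ(L*, A)
    (hMAR : CondIndepFun (MeasurableSpace.comap (fun ω => (Lstar ω, A ω)) inferInstance)
      ((hLstar.prodMk hA).comap_le) R (fun ω => (L ω, Y ω)) μ)
    -- Assumption A5 (missingness positivity)
    (η : (Fin p → ℝ) → ℝ → ℝ) (hη : Measurable (Function.uncurry η))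
    (hηver : (fun ω => η (Lstar ω) (A ω)) =ᵐ[μ]
      μ[R|MeasurableSpace.comap (fun ω => (Lstar ω, A ω)) inferInstance])
    (ε₀ : ℝ) (hε₀ : 0 < ε₀)
    (hηpos : ∀ᵐ ω ∂μ, ε₀ ≤ η (Lstar ω) 0 ∧ ε₀ ≤ η (Lstar ω) 1)
    -- true nuisance ε₁
    (ε₁f : (Fin p → ℝ) → ℝ → ℝ) (hε₁f : Measurable (Function.uncurry ε₁f))
    (hε₁ver : (fun ω => ε₁f (Lstar ω) (Y ω)) =ᵐ[μ[|{ω | A ω = 1 ∧ R ω = 1}]]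
      (μ[|{ω | A ω = 1 ∧ R ω = 1}])[(fun ω => g (L ω) (A ω))|MeasurableSpace.comap
          (fun ω => (Lstar ω, Y ω)) inferInstance])
    -- estimated (barred) nuisances: bounded measurable, η̄₁ bounded below
    (ηbar₁ : (Fin p → ℝ) → ℝ) (hηbar₁ : Measurable ηbar₁)
    (ε' : ℝ) (hε' : 0 < ε') (hηbar₁lb : ∀ x, ε' ≤ ηbar₁ x)
    (εbar₁ : (Fin p → ℝ) → ℝ → ℝ) (hεbar₁ : Measurable (Function.uncurry εbar₁))
    (Cε : ℝ) (hεbar₁bd : ∀ x y, |εbar₁ x y| ≤ Cε) :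
    ∫ ω, A ω * (1 - R ω / ηbar₁ (Lstar ω)) * εbar₁ (Lstar ω) (Y ω) ∂μ
      + ∫ ω, A ω * R ω * g (L ω) (A ω) / ηbar₁ (Lstar ω) ∂μ
      - ∫ ω, A ω * ε₁f (Lstar ω) (Y ω) ∂μ
    = ∫ ω, A ω * (εbar₁ (Lstar ω) (Y ω) - ε₁f (Lstar ω) (Y ω))
          * (1 - η (Lstar ω) 1 / ηbar₁ (Lstar ω)) ∂μ := by
  have hU : Measurable fun ω => (Lstar ω, A ω) := by fun_prop
  have hV : Measurable fun ω => (L ω, Y ω) := by fun_prop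
  have hR_Icc : ∀ ω, R ω ∈ Set.Icc 0 1 := fun ω => by rcases hR01 ω with h | h <;> simp [h]
  have hg_Icc : ∀ ω, g (L ω) (A ω) ∈ Set.Icc 0 1 := fun ω => by
    rcases hg01 (L ω) (A ω) with h | h <;> simp [h]
  have hηA_Icc := ae_mem_Icc_of_ae_eq_condExp hR_Icc hηver
  have hηA_pos : ∀ᵐ ω ∂μ, 0 < η (Lstar ω) (A ω) := hηpos.mono fun ω h => by
    rcases hA01 ω with hA | hA <;> rw [hA] <;> linarith [h.1, h.2]
  have hmap := map_withDensity_eq_of_condIndepFun_s8 hU hV hR hR01 hMAR hη hηver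
  have htransfer := integral_mul_mul_comp_eq_of_map_withDensity_eq hLstar hA hV hR hη hA01
    (fun ω => (hR_Icc ω).1) (hηA_Icc.mono fun ω h => h.1) hmap
  have hε₁_Icc : ∀ᵐ ω ∂μ, A ω = 1 → ε₁f (Lstar ω) (Y ω) ∈ Set.Icc 0 1 :=
    ae_imp_of_ae_cond_of_map_withDensity_eq (P := fun z => ε₁f z.1 z.2.2 ∈ Set.Icc 0 1)
      hLstar hA hV hR hη hR01 hηA_pos hmap (by measurability)
      (ae_mem_Icc_of_ae_eq_condExp hg_Icc hε₁ver)
  have hcc : ∫ ω in {ω | A ω = 1 ∧ R ω = 1}, (ηbar₁ (Lstar ω))⁻¹ * g (L ω) (A ω) ∂μ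
      = ∫ ω in {ω | A ω = 1 ∧ R ω = 1}, (ηbar₁ (Lstar ω))⁻¹ * ε₁f (Lstar ω) (Y ω) ∂μ :=
    setIntegral_mul_eq_of_ae_eq_condExp_cond (hLstar.prodMk hY).comap_le
      ((hηbar₁.comp measurable_fst).inv.comp (comap_measurable _)).stronglyMeasurable ε'⁻¹
      (.of_forall fun ω => by
        rw [norm_inv]; exact inv_anti₀ hε' ((hηbar₁lb _).trans (Real.le_norm_self _)))
      (.of_bound (by fun_prop : Measurable fun ω => g (L ω) (A ω)).aestronglyMeasurable 1
        (.of_forall fun ω => abs_le_one_of_mem_Icc (hg_Icc ω))) hε₁ver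
  refine integral_remainder_eq hA hR (by fun_prop) (by fun_prop) (by fun_prop) (by fun_prop) hA01
    hR_Icc (fun ω => hεbar₁bd _ _) hε' (fun ω => hηbar₁lb _)
    (hηA_Icc.mono fun ω h hA1 => hA1 ▸ h) hε₁_Icc ?_ ?_
  · exact htransfer (fun z => (ηbar₁ z.1)⁻¹ * εbar₁ z.1 z.2.2) (by fun_prop)
  · rw [integral_mul_mul_eq_setIntegral hA hR hA01 hR01, hcc,
      ← integral_mul_mul_eq_setIntegral hA hR hA01 hR01]
    exact htransfer (fun z => (ηbar₁ z.1)⁻¹ * ε₁f z.1 z.2.2) (by fun_prop)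

/-- **Lemma 1 (α-remainder / von Mises expansion for α(P)).** The remainder
`α(P̄) − α(P) + ∫ α̇*_{P̄} dP` equals a second-order product of nuisance errors. -/
theorem stmt_8
    {Ω : Type*} [𝓕 : MeasurableSpace Ω] [StandardBorelSpace Ω] [Nonempty Ω]
    (μ : Measure Ω) [IsProbabilityMeasure μ]
    {p q : ℕ}
    (Lstar : Ω → Fin p → ℝ) (L : Ω → Fin q → ℝ) (A R Y : Ω → ℝ)
    (hLstar : Measurable Lstar) (hL : Measurable L)
    (hA : Measurable A) (hR : Measurable R) (hY : Measurable Y)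
    (hA01 : ∀ ω, A ω = 0 ∨ A ω = 1) (hR01 : ∀ ω, R ω = 0 ∨ R ω = 1)
    (hY2 : MemLp Y 2 μ)
    (g : (Fin q → ℝ) → ℝ → ℝ) (hg : Measurable (Function.uncurry g))
    (hg01 : ∀ x a, g x a = 0 ∨ g x a = 1)
    -- Assumption A4 (MAR): R ⫫ (L, Y) | σ(L*, A)
    (hMAR : CondIndepFun (MeasurableSpace.comap (fun ω => (Lstar ω, A ω)) inferInstance)
      ((hLstar.prodMk hA).comap_le) R (fun ω => (L ω, Y ω)) μ)
    -- Assumption A5 (missingness positivity)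
    (η : (Fin p → ℝ) → ℝ → ℝ) (hη : Measurable (Function.uncurry η))
    (hηver : (fun ω => η (Lstar ω) (A ω)) =ᵐ[μ]
      μ[R|MeasurableSpace.comap (fun ω => (Lstar ω, A ω)) inferInstance])
    (ε₀ : ℝ) (hε₀ : 0 < ε₀)
    (hηpos : ∀ᵐ ω ∂μ, ε₀ ≤ η (Lstar ω) 0 ∧ ε₀ ≤ η (Lstar ω) 1)
    (hA1R : 0 < μ {ω | A ω = 1 ∧ R ω = 1})
    -- true nuisance ε₁
    (ε₁f : (Fin p → ℝ) → ℝ → ℝ) (hε₁f : Measurable (Function.uncurry ε₁f))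
    (hε₁ver : (fun ω => ε₁f (Lstar ω) (Y ω)) =ᵐ[μ[|{ω | A ω = 1 ∧ R ω = 1}]]
      (μ[|{ω | A ω = 1 ∧ R ω = 1}])[(fun ω => g (L ω) (A ω))|MeasurableSpace.comap
          (fun ω => (Lstar ω, Y ω)) inferInstance])
    -- estimated (barred) nuisances: bounded measurable, η̄₁ bounded below
    (ηbar₁ : (Fin p → ℝ) → ℝ) (hηbar₁ : Measurable ηbar₁)
    (Cη : ℝ) (hηbar₁bd : ∀ x, |ηbar₁ x| ≤ Cη)
    (ε' : ℝ) (hε' : 0 < ε') (hηbar₁lb : ∀ x, ε' ≤ ηbar₁ x)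
    (εbar₁ : (Fin p → ℝ) → ℝ → ℝ) (hεbar₁ : Measurable (Function.uncurry εbar₁))
    (Cε : ℝ) (hεbar₁bd : ∀ x y, |εbar₁ x y| ≤ Cε) :
    ∫ ω, A ω * (1 - R ω / ηbar₁ (Lstar ω)) * εbar₁ (Lstar ω) (Y ω) ∂μ
      + ∫ ω, A ω * R ω * g (L ω) (A ω) / ηbar₁ (Lstar ω) ∂μ
      - ∫ ω, A ω * ε₁f (Lstar ω) (Y ω) ∂μ
    = ∫ ω, A ω * (εbar₁ (Lstar ω) (Y ω) - ε₁f (Lstar ω) (Y ω))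
          * (1 - η (Lstar ω) 1 / ηbar₁ (Lstar ω)) ∂μ :=
  stmt_8_general (𝓕 := 𝓕) μ Lstar L A R Y hLstar hL hA hR hY hA01 hR01 g hg hg01 hMAR η hη hηver ε₀
    hε₀ hηpos ε₁f hε₁f hε₁ver ηbar₁ hηbar₁ ε' hε' hηbar₁lb εbar₁ hεbar₁ Cε hεbar₁bd
end
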